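/- arXiv:1502.05937 — 4 statements merged into one kernel-verified Lean document; each statement's English description precedes it below -/
import Mathlib

section
/- Let a < b be two distinct characters of Σ, let x ≥ 3, and let T_x = a b a^2 b a^3 b ⋯ a^x b # (of length x(x+3)/2 + 1). The set of nonempty maximal repeats of T_x is exactly {a^i b : i ∈ [1..x−1]} ∪ {a^j : j ∈ [1..x−1]} ∪ {a^{k−1} b a^k : k ∈ [2..x−1]}. -/
/-! Basic definitions: strings are lists of naturals; the separator `#` is `0`;
the alphabet is `Σ = [1..σ]`. Occurrences are taken in the circular version of `T`. -/

noncomputable section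
open Classical

/-- `T` is a string over the alphabet `[1..σ]` followed by the separator `# = 0`
(so `#` occurs in `T` exactly once, at the last position). -/
def Wellformed (σ : ℕ) (T : List ℕ) : Prop :=
  ∃ S : List ℕ, T = S ++ [0] ∧ ∀ c ∈ S, 1 ≤ c ∧ c ≤ σ

/-- The rotation of `T` starting at position `i`. -/
def rot (T : List ℕ) (i : ℕ) : List ℕ := T.drop i ++ T.take i

/-- `W` occurs at position `i` of the circular version of `T`. -/
def CircOccAt (T W : List ℕ) (i : ℕ) : Prop :=
  ∀ j < W.length, W.getD j 0 = T.getD ((i + j) % T.length) 0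

/-- `𝒫_T(W)`: the set of starting positions of occurrences of `W` in the circular
version of `T`. -/
def Pset (T W : List ℕ) : Finset ℕ :=
  (Finset.range T.length).filter (fun i => CircOccAt T W i)

/-- `W` occurs in the circular version of `T`. -/
def OccursCirc (T W : List ℕ) : Prop := (Pset T W).Nonempty

/-- `Σ^ℓ_T(W)`: the set of characters `a` such that `aW` occurs in circular `T`. -/
def SigmaL (T W : List ℕ) : Finset ℕ :=
  T.toFinset.filter (fun a => OccursCirc T (a :: W))

/-- `Σ^r_T(W)`: the set of characters `b` such that `Wb` occurs in circular `T`. -/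
def SigmaR (T W : List ℕ) : Finset ℕ :=
  T.toFinset.filter (fun b => OccursCirc T (W ++ [b]))

/-- `W` is left-maximal in `T`. -/
def LeftMaximal (T W : List ℕ) : Prop := 1 < (SigmaL T W).card

/-- `W` is right-maximal in `T`. -/
def RightMaximal (T W : List ℕ) : Prop := 1 < (SigmaR T W).card

/-- The (finite) collection of substrings of the circular version of `T`. -/
def circSubstrings (T : List ℕ) : Finset (List ℕ) :=
  ((Finset.range T.length) ×ˢ (Finset.range (T.length + 1))).image
    (fun p => (rot T p.1).take p.2)

/-- `ℳ_T`: the set of nonempty maximal repeats of `T`, i.e. repeats that are both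
left-maximal and right-maximal.  (Every maximal repeat occurs in circular `T` and has
length at most `|T|`, so it belongs to `circSubstrings T`.) -/
def MaxRepeats (T : List ℕ) : Finset (List ℕ) :=
  (circSubstrings T).filter
    (fun W => W ≠ [] ∧ 1 < (Pset T W).card ∧ LeftMaximal T W ∧ RightMaximal T W)

/-- Strict lexicographic comparison of strings (a proper prefix is smaller). -/
def lexLt : List ℕ → List ℕ → Bool
  | [], [] => false
  | [], _ :: _ => true
  | _ :: _, [] => false
  | a :: A, b :: B => decide (a < b) || (a == b && lexLt A B)

/-- Non-strict lexicographic comparison. -/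
def lexLe (A B : List ℕ) : Bool := !(lexLt B A)

/-- The Burrows–Wheeler transform of `T`: the `i`-th character of `BWT T` is the last
character of the lexicographically `i`-th rotation of `T`. -/
def BWT (T : List ℕ) : List ℕ :=
  (((List.range T.length).map (rot T)).mergeSort lexLe).map (fun R => R.getLast!)

/-- The number of runs of a string, i.e. the number of maximal intervals on which all
characters are equal. -/
def numRuns : List ℕ → ℕ
  | [] => 0
  | [_] => 1
  | a :: b :: l => (if a = b then 0 else 1) + numRuns (b :: l)


noncomputable section
open Classical

/-- `ℳ^r_T`: the set of rightmost maximal repeats of `T`: maximal repeats `W` such that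
no string `WV` with `V` nonempty is left-maximal in `T`. -/
def RightmostMaxRepeats (T : List ℕ) : Finset (List ℕ) :=
  (MaxRepeats T).filter (fun W => ∀ V : List ℕ, V ≠ [] → ¬ LeftMaximal T (W ++ V))

/-- `Y` is the shortest right-maximal extension of `X` in `T`: the shortest
right-maximal string of `T` having `X` as a prefix. -/
def ShortestRightMaxExt (T X Y : List ℕ) : Prop :=
  X <+: Y ∧ RightMaximal T Y ∧
    ∀ Z : List ℕ, X <+: Z → RightMaximal T Z → Y.length ≤ Z.length

/-- `ℱ^r_T`: pairs `(V, b)` with `V ∈ ℳ_T ∪ {ε}` and `b ∈ Σ^r_T(V)` such that either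
`Vb` occurs exactly once in circular `T`, or the shortest right-maximal extension of
`Vb` is not a maximal repeat of `T`.  These pairs correspond to the suffix-tree edges
of `T` from maximal-repeat nodes to non-maximal-repeat nodes. -/
def Fr (T : List ℕ) : Finset (List ℕ × ℕ) :=
  ((insert ([] : List ℕ) (MaxRepeats T)) ×ˢ T.toFinset).filter
    (fun p => p.2 ∈ SigmaR T p.1 ∧
      ((Pset T (p.1 ++ [p.2])).card = 1 ∨
        ∀ Y : List ℕ, ShortestRightMaxExt T (p.1 ++ [p.2]) Y → Y ∉ MaxRepeats T))

/-- `e_T`: the number of right extensions of maximal repeats of `T`, i.e. the number of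
pairs `(V, b)` with `V ∈ ℳ_T ∪ {ε}` and `b ∈ Σ^r_T(V)`.  This equals the number of
arcs of the CDAWG of `T`. -/
def eCount (T : List ℕ) : ℕ :=
  ∑ V ∈ insert ([] : List ℕ) (MaxRepeats T), (SigmaR T V).card

/-- The next LZ77 factor, to be placed at position `k` of `T`, may be `F` if `F` is a
single character (every single character of `T` has a source among the `σ+1` distinct
characters virtually preceding `T`), or if `F` has an occurrence in `T` starting at a
position `j` strictly before `k`. -/
def LZsource (T : List ℕ) (k : ℕ) (F : List ℕ) : Prop :=
  F.length = 1 ∨ ∃ j, j < k ∧ F <+: T.drop j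

/-- `fs` is the LZ77 factorization of `T` (greedy: each factor is the longest prefix of
the remaining suffix admitting a source). -/
def IsLZ77 (T : List ℕ) (fs : List (List ℕ)) : Prop :=
  fs.flatten = T ∧ (∀ F ∈ fs, F ≠ []) ∧
    ∀ i, (h : i < fs.length) →
      LZsource T ((fs.take i).flatten).length (fs.get ⟨i, h⟩) ∧
      ∀ F' : List ℕ, F' <+: T.drop ((fs.take i).flatten).length →
        (fs.get ⟨i, h⟩).length < F'.length →
          ¬ LZsource T ((fs.take i).flatten).length F'

/-- `N_T(X)`: the number of rotations of `T` lexicographically smaller than `X`. -/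
def Nrank (T X : List ℕ) : ℕ :=
  ((List.range T.length).filter (fun i => lexLt (rot T i) X)).length

/-- The string `a b a² b a³ b ⋯ aˣ b #`. -/
def Tx (a b x : ℕ) : List ℕ :=
  (((List.range x).map (fun i => List.replicate (i + 1) a ++ [b])).flatten) ++ [0]

end

namespace TxProof
variable (a b : ℕ)

def SxL (k : ℕ) : List ℕ :=
  ((List.range k).map (fun i => List.replicate (i + 1) a ++ [b])).flatten

def triN : ℕ → ℕ
  | 0 => 0
  | m + 1 => triN m + (m + 2)

lemma SxL_succ (k : ℕ) :
    SxL a b (k + 1) = SxL a b k ++ (List.replicate (k + 1) a ++ [b]) := by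
  simp [SxL, List.range_succ]

lemma Tx_eq (x : ℕ) : Tx a b x = SxL a b x ++ [0] := rfl

lemma SxL_length (k : ℕ) : (SxL a b k).length = triN k := by
  induction k with
  | zero => simp [SxL, triN]
  | succ m ih => rw [SxL_succ]; simp [triN, ih]

lemma triN_lt_succ (m : ℕ) : triN m < triN (m + 1) := by simp [triN]

lemma triN_mono : Monotone triN := monotone_nat_of_le_succ (fun m => (triN_lt_succ m).le)

lemma mem_SxL {c : ℕ} {k : ℕ} (h : c ∈ SxL a b k) : c = a ∨ c = b := by
  induction k with
  | zero => simp [SxL] at h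
  | succ m ih =>
    rw [SxL_succ] at h
    simp only [List.mem_append, List.mem_replicate, List.mem_singleton] at h
    rcases h with h | h | h
    · exact ih h
    · exact Or.inl h.2
    · exact Or.inr h

lemma drop_triN {m x : ℕ} (hm : m < x) :
    (SxL a b x).drop (triN m) =
      List.replicate (m + 1) a ++ [b] ++ (SxL a b x).drop (triN (m + 1)) := by
  induction x with
  | zero => omega
  | succ k ih =>
    rcases Nat.lt_or_ge m k with hk | hk
    · rw [SxL_succ, List.drop_append_of_le_length, List.drop_append_of_le_length, ih hk]
      · simp
      · rw [SxL_length]; exact triN_mono hk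
      · rw [SxL_length]; exact (triN_mono (by omega : m ≤ k))
    · have : m = k := by omega
      subst this
      rw [SxL_succ, List.drop_append_of_le_length (by rw [SxL_length])]
      have h1 : (SxL a b m).drop (triN m) = [] := by
        rw [List.drop_eq_nil_iff, SxL_length]
      have h2 : (SxL a b m ++ (List.replicate (m+1) a ++ [b])).drop (triN (m+1)) = [] := by
        rw [← SxL_succ, List.drop_eq_nil_iff, SxL_length]
      rw [h1, h2]; simp

lemma drop_triN_top (x : ℕ) : (SxL a b x).drop (triN x) = [] := by
  rw [List.drop_eq_nil_iff, SxL_length]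

lemma dropDec {m r x : ℕ} (hm : m < x) (hr : r ≤ m + 1) :
    (SxL a b x).drop (triN m + r) =
      List.replicate (m + 1 - r) a ++ ([b] ++ (SxL a b x).drop (triN (m + 1))) := by
  have := drop_triN a b hm
  have h : (SxL a b x).drop (triN m + r) = ((SxL a b x).drop (triN m)).drop r := by
    rw [List.drop_drop]
  rw [h, this, List.append_assoc, List.drop_append_of_le_length (by simp [hr]),
    List.drop_replicate]

lemma idx_decompose {i x : ℕ} (hi : i < triN x) :
    ∃ m r, m < x ∧ r ≤ m + 1 ∧ i = triN m + r := by
  induction x with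
  | zero => simp [triN] at hi
  | succ k ih =>
    rcases Nat.lt_or_ge i (triN k) with h | h
    · obtain ⟨m, r, h1, h2, h3⟩ := ih h
      exact ⟨m, r, by omega, h2, h3⟩
    · have hk2 : i < triN k + (k + 2) := hi
      exact ⟨k, i - triN k, by omega, by omega, by omega⟩


lemma prefix_getD {W L : List ℕ} (h : W <+: L) {j : ℕ} (hj : j < W.length) :
    W.getD j 0 = L.getD j 0 := by
  obtain ⟨t, rfl⟩ := h
  rw [List.getD_eq_getElem _ _ hj, List.getD_eq_getElem _ _ (by simp; omega),
    List.getElem_append_left hj]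

lemma prefix_of_getD {W L : List ℕ} (hlen : W.length ≤ L.length)
    (h : ∀ j < W.length, W.getD j 0 = L.getD j 0) : W <+: L := by
  rw [List.prefix_iff_eq_take]
  apply List.ext_getElem (by simp; omega)
  intro i h1 h2
  have := h i (by omega)
  rw [List.getD_eq_getElem _ _ h1, List.getD_eq_getElem _ _ (by omega)] at this
  simpa using this

lemma getD_drop {L : List ℕ} {i j : ℕ} (h : i + j < L.length) :
    (L.drop i).getD j 0 = L.getD (i + j) 0 := by
  rw [List.getD_eq_getElem _ _ (by simp; omega), List.getD_eq_getElem _ _ h]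
  simp [List.getElem_drop]

-- pattern matching lemmas
lemma PM1 {a b : ℕ} (hab : a ≠ b) :
    ∀ {p u : ℕ} {Y Z : List ℕ},
      (List.replicate p a ++ [b] ++ Y <+: List.replicate u a ++ [b] ++ Z) →
        p = u ∧ Y <+: Z := by
  intro p
  induction p with
  | zero =>
    intro u Y Z h
    cases u with
    | zero => simpa [List.cons_prefix_cons] using h
    | succ v =>
      simp only [List.replicate_succ, List.replicate_zero, List.nil_append,
        List.cons_append, List.cons_prefix_cons] at h
      exact absurd h.1 hab.symm
  | succ q ih =>
    intro u Y Z h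
    cases u with
    | zero =>
      simp only [List.replicate_succ, List.replicate_zero, List.nil_append,
        List.cons_append, List.cons_prefix_cons] at h
      exact absurd h.1 hab
    | succ v =>
      simp only [List.replicate_succ, List.cons_append, List.cons_prefix_cons] at h
      obtain ⟨h1, h2⟩ := ih h.2
      exact ⟨by omega, h2⟩

lemma PM2 {a b : ℕ} (hab : a ≠ b) :
    ∀ {j u : ℕ} {Z : List ℕ},
      (List.replicate j a <+: List.replicate u a ++ [b] ++ Z) → j ≤ u := by
  intro j
  induction j with
  | zero => intro u Z _; omega
  | succ q ih =>
    intro u Z h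
    cases u with
    | zero =>
      simp only [List.replicate_succ, List.replicate_zero, List.nil_append,
        List.cons_append, List.singleton_append, List.cons_prefix_cons] at h
      exact absurd h.1 hab
    | succ v =>
      simp only [List.replicate_succ, List.cons_append, List.cons_prefix_cons] at h
      have := ih h.2
      omega

lemma PM2' {a b : ℕ} {j u : ℕ} {Z : List ℕ} (h : j ≤ u) :
    List.replicate j a <+: List.replicate u a ++ [b] ++ Z := by
  have e : List.replicate u a ++ [b] ++ Z
      = List.replicate j a ++ (List.replicate (u - j) a ++ [b] ++ Z) := by
    rw [← List.append_assoc, ← List.append_assoc, ← List.replicate_add]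
    congr 3
    omega
  rw [e]
  exact List.prefix_append _ _


variable (x : ℕ)

lemma Tx_length : (Tx a b x).length = triN x + 1 := by
  rw [Tx_eq]; simp [SxL_length]

lemma getD_Tx_of_lt {p : ℕ} (hp : p < triN x) :
    (Tx a b x).getD p 0 = (SxL a b x).getD p 0 := by
  rw [Tx_eq]; exact List.getD_append _ _ _ _ (by rw [SxL_length]; omega)

lemma getD_Tx_last : (Tx a b x).getD (triN x) 0 = 0 := by
  rw [Tx_eq, List.getD_append_right _ _ _ _ (by rw [SxL_length])]
  simp [SxL_length]

lemma getD_Tx_ne_zero (ha : 1 ≤ a) (hb : 1 ≤ b) {p : ℕ} (hp : p < triN x) :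
    (Tx a b x).getD p 0 ≠ 0 := by
  rw [getD_Tx_of_lt a b x hp]
  have hpl : p < (SxL a b x).length := by rw [SxL_length]; omega
  rw [List.getD_eq_getElem _ _ hpl]
  have := mem_SxL a b (List.getElem_mem hpl)
  omega

lemma mem_Pset_of {i : ℕ} {W : List ℕ} (hi : i < triN x)
    (h : W <+: (SxL a b x).drop i) : i ∈ Pset (Tx a b x) W := by
  have hlen : W.length ≤ triN x - i := by
    have := h.length_le; rwa [List.length_drop, SxL_length] at this
  simp only [Pset, Finset.mem_filter, Finset.mem_range, Tx_length]
  refine ⟨by omega, fun j hj => ?_⟩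
  have hij : i + j < triN x := by omega
  rw [Tx_length, Nat.mod_eq_of_lt (by omega), getD_Tx_of_lt a b x hij,
    ← getD_drop (by rw [SxL_length]; omega)]
  exact prefix_getD h hj

lemma of_mem_Pset (ha : 1 ≤ a) (hb : 1 ≤ b) {i : ℕ} {W : List ℕ}
    (hW : W ≠ []) (h0 : (0:ℕ) ∉ W) (hi : i ∈ Pset (Tx a b x) W) :
    i < triN x ∧ W <+: (SxL a b x).drop i := by
  simp only [Pset, Finset.mem_filter, Finset.mem_range, Tx_length] at hi
  obtain ⟨hin, hocc⟩ := hi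
  have hWpos : 0 < W.length := List.length_pos_iff.mpr hW
  have hwin : i + W.length ≤ triN x := by
    by_contra hcon
    push_neg at hcon
    have hjW : triN x - i < W.length := by omega
    have h1 := hocc _ hjW
    rw [Tx_length, show i + (triN x - i) = triN x by omega,
      Nat.mod_eq_of_lt (by omega), getD_Tx_last] at h1
    exact h0 (by rw [List.getD_eq_getElem _ _ hjW] at h1; exact h1 ▸ List.getElem_mem hjW)
  refine ⟨by omega, ?_⟩
  apply prefix_of_getD (by rw [List.length_drop, SxL_length]; omega)
  intro j hj
  have h1 := hocc j hj
  rw [Tx_length, Nat.mod_eq_of_lt (by omega), getD_Tx_of_lt a b x (by omega)] at h1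
  rw [h1, getD_drop (by rw [SxL_length]; omega)]

lemma occursCirc_iff (ha : 1 ≤ a) (hb : 1 ≤ b) {W : List ℕ}
    (hW : W ≠ []) (h0 : (0:ℕ) ∉ W) :
    OccursCirc (Tx a b x) W ↔ ∃ i < triN x, W <+: (SxL a b x).drop i := by
  constructor
  · rintro ⟨i, hi⟩
    obtain ⟨h1, h2⟩ := of_mem_Pset a b x ha hb hW h0 hi
    exact ⟨i, h1, h2⟩
  · rintro ⟨i, h1, h2⟩
    exact ⟨i, mem_Pset_of a b x h1 h2⟩

lemma occursCirc_cons_zero (ha : 1 ≤ a) (hb : 1 ≤ b) {W : List ℕ}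
    (hlen : W.length ≤ triN x) :
    OccursCirc (Tx a b x) ((0:ℕ) :: W) ↔ W <+: SxL a b x := by
  constructor
  · rintro ⟨i, hi⟩
    simp only [Pset, Finset.mem_filter, Finset.mem_range, Tx_length] at hi
    obtain ⟨hin, hocc⟩ := hi
    have h1 := hocc 0 (by simp)
    rw [Tx_length, Nat.mod_eq_of_lt (by omega)] at h1
    simp only [Nat.add_zero, List.getD_cons_zero] at h1
    have hieq : i = triN x := by
      by_contra hne
      exact getD_Tx_ne_zero a b x ha hb (by omega) h1.symm
    apply prefix_of_getD (by rw [SxL_length]; omega)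
    intro j hj
    have h2 := hocc (j + 1) (by simp; omega)
    rw [Tx_length, hieq] at h2
    have : (triN x + (j + 1)) % (triN x + 1) = j := by
      rw [show triN x + (j + 1) = (triN x + 1) + j by omega, Nat.add_mod_left,
        Nat.mod_eq_of_lt (by omega)]
    rw [this, getD_Tx_of_lt a b x (by omega)] at h2
    simpa using h2
  · intro h
    refine ⟨triN x, ?_⟩
    simp only [Pset, Finset.mem_filter, Finset.mem_range, Tx_length]
    refine ⟨by omega, fun j hj => ?_⟩
    rw [Tx_length]
    match j with
    | 0 =>
      rw [Nat.add_zero, Nat.mod_eq_of_lt (by omega), getD_Tx_last]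
      simp
    | j + 1 =>
      simp only [List.length_cons] at hj
      have hjW : j < W.length := by omega
      have hmod : (triN x + (j + 1)) % (triN x + 1) = j := by
        rw [show triN x + (j + 1) = (triN x + 1) + j by omega, Nat.add_mod_left,
          Nat.mod_eq_of_lt (by omega)]
      rw [hmod, getD_Tx_of_lt a b x (by omega), List.getD_cons_succ]
      exact prefix_getD h hjW

lemma occursCirc_append_zero (ha : 1 ≤ a) (hb : 1 ≤ b) {W : List ℕ}
    (hlen : W.length ≤ triN x) :
    OccursCirc (Tx a b x) (W ++ [(0:ℕ)]) ↔ W <:+ SxL a b x := by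
  constructor
  · rintro ⟨i, hi⟩
    simp only [Pset, Finset.mem_filter, Finset.mem_range, Tx_length] at hi
    obtain ⟨hin, hocc⟩ := hi
    have h1 := hocc W.length (by simp)
    rw [Tx_length] at h1
    rw [List.getD_append_right _ _ _ _ (le_refl _), Nat.sub_self] at h1
    simp only [List.getD_cons_zero] at h1
    have heq : (i + W.length) % (triN x + 1) = triN x := by
      by_contra hne
      have hlt : (i + W.length) % (triN x + 1) < triN x := by
        have := Nat.mod_lt (i + W.length) (show 0 < triN x + 1 by omega)
        omega
      exact getD_Tx_ne_zero a b x ha hb hlt h1.symm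
    have hieq : i + W.length = triN x := by
      rcases Nat.lt_or_ge (i + W.length) (triN x + 1) with hc | hc
      · rwa [Nat.mod_eq_of_lt hc] at heq
      · have h2 : i + W.length - (triN x + 1) < triN x + 1 := by omega
        rw [show i + W.length = (i + W.length - (triN x + 1)) + 1 * (triN x + 1) by omega,
          Nat.add_mul_mod_self_right, Nat.mod_eq_of_lt h2] at heq
        omega
    have hpre : W <+: (SxL a b x).drop i := by
      apply prefix_of_getD (by rw [List.length_drop, SxL_length]; omega)
      intro j hj
      have h2 := hocc j (by simp; omega)
      rw [Tx_length, Nat.mod_eq_of_lt (by omega), getD_Tx_of_lt a b x (by omega),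
        List.getD_append _ _ _ _ hj] at h2
      rw [h2, getD_drop (by rw [SxL_length]; omega)]
    have : W = (SxL a b x).drop i :=
      hpre.eq_of_length (by rw [List.length_drop, SxL_length]; omega)
    rw [this]
    exact List.drop_suffix _ _
  · rintro ⟨t, ht⟩
    have hti : t.length + W.length = triN x := by
      have := congrArg List.length ht
      simp [SxL_length] at this
      omega
    refine ⟨t.length, ?_⟩
    simp only [Pset, Finset.mem_filter, Finset.mem_range, Tx_length]
    refine ⟨by omega, fun j hj => ?_⟩
    rw [Tx_length]
    simp only [List.length_append, List.length_cons, List.length_nil] at hj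
    rcases Nat.lt_or_ge j W.length with hc | hc
    · rw [Nat.mod_eq_of_lt (by omega), getD_Tx_of_lt a b x (by omega),
        List.getD_append _ _ _ _ hc, ← ht,
        List.getD_append_right _ _ _ _ (by omega),
        show t.length + j - t.length = j by omega]
    · have hjW : j = W.length := by omega
      subst hjW
      rw [show t.length + W.length = triN x by omega, Nat.mod_eq_of_lt (by omega),
        getD_Tx_last, List.getD_append_right _ _ _ _ (le_refl _), Nat.sub_self]
      simp

lemma zero_mem_Tx : (0:ℕ) ∈ Tx a b x := by rw [Tx_eq]; simp

lemma SxL_head (hx : 0 < x) :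
    SxL a b x = List.replicate 1 a ++ [b] ++ (SxL a b x).drop (triN 1) := by
  have := drop_triN a b (m := 0) hx
  simpa [triN] using this

lemma a_mem_Tx (hx : 0 < x) : a ∈ Tx a b x := by
  rw [Tx_eq]
  have := SxL_head a b x hx
  simp only [List.mem_append]
  left; rw [this]; simp

lemma b_mem_Tx (hx : 0 < x) : b ∈ Tx a b x := by
  rw [Tx_eq]
  have := SxL_head a b x hx
  simp only [List.mem_append]
  left; rw [this]; simp

lemma mem_Tx {c : ℕ} (h : c ∈ Tx a b x) : c = a ∨ c = b ∨ c = 0 := by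
  rw [Tx_eq] at h
  simp only [List.mem_append, List.mem_singleton] at h
  rcases h with h | h
  · rcases mem_SxL a b h with h | h
    · exact Or.inl h
    · exact Or.inr (Or.inl h)
  · exact Or.inr (Or.inr h)

lemma mem_circSubstrings_of {i : ℕ} {W : List ℕ} (hi : i < triN x)
    (h : W <+: (SxL a b x).drop i) : W ∈ circSubstrings (Tx a b x) := by
  have hlen : W.length ≤ triN x - i := by
    have := h.length_le; rwa [List.length_drop, SxL_length] at this
  have hdropT : (Tx a b x).drop i = (SxL a b x).drop i ++ [0] := by
    rw [Tx_eq, List.drop_append_of_le_length (by rw [SxL_length]; omega)]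
  have h2 : W <+: rot (Tx a b x) i := by
    unfold rot
    rw [hdropT, List.append_assoc]
    exact h.trans (List.prefix_append _ _)
  simp only [circSubstrings, Finset.mem_image, Finset.mem_product, Prod.exists]
  refine ⟨i, W.length, ?_, ?_⟩
  · simp only [Finset.mem_product, Finset.mem_range, Tx_length]
    constructor <;> omega
  · exact (List.prefix_iff_eq_take.mp h2).symm

lemma mem_SigmaL {c : ℕ} {W : List ℕ} :
    c ∈ SigmaL (Tx a b x) W ↔ c ∈ Tx a b x ∧ OccursCirc (Tx a b x) (c :: W) := by
  simp [SigmaL, Finset.mem_filter, List.mem_toFinset]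

lemma mem_SigmaR {c : ℕ} {W : List ℕ} :
    c ∈ SigmaR (Tx a b x) W ↔ c ∈ Tx a b x ∧ OccursCirc (Tx a b x) (W ++ [c]) := by
  simp [SigmaR, Finset.mem_filter, List.mem_toFinset]

/-- stripping leading `a`s -/
lemma strip (a b : ℕ) : ∀ W : List ℕ, (∀ c ∈ W, c = a ∨ c = b) →
    ∃ p V, W = List.replicate p a ++ V ∧ (∀ c ∈ V, c = a ∨ c = b) ∧
      (V = [] ∨ ∃ V', V = b :: V') := by
  intro W
  induction W with
  | nil => exact fun _ => ⟨0, [], by simp⟩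
  | cons c W' ih =>
    intro hc
    rcases hc c (by simp) with rfl | hcb
    · obtain ⟨p, V, h1, h2, h3⟩ := ih (fun d hd => hc d (by simp [hd]))
      exact ⟨p + 1, V, by simp [List.replicate_succ, h1], h2, h3⟩
    · exact ⟨0, c :: W', by simp, hc, Or.inr ⟨W', by rw [hcb]⟩⟩

lemma shape (a b : ℕ) (W : List ℕ) (hc : ∀ c ∈ W, c = a ∨ c = b) :
    (∃ j, W = List.replicate j a) ∨
    (∃ p s, W = List.replicate p a ++ [b] ++ List.replicate s a) ∨
    (∃ p q R, W = List.replicate p a ++ [b] ++ (List.replicate q a ++ ([b] ++ R))) := by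
  obtain ⟨p, V, h1, h2, h3⟩ := strip a b W hc
  rcases h3 with rfl | ⟨V', rfl⟩
  · exact Or.inl ⟨p, by simpa using h1⟩
  · obtain ⟨q, U, g1, g2, g3⟩ := strip a b V' (fun d hd => h2 d (by simp [hd]))
    rcases g3 with rfl | ⟨U', rfl⟩
    · refine Or.inr (Or.inl ⟨p, q, ?_⟩)
      rw [h1, g1]; simp
    · refine Or.inr (Or.inr ⟨p, q, U', ?_⟩)
      rw [h1, g1]; simp

lemma prefAppendLeft {l y z : List ℕ} (h : y <+: z) : l ++ y <+: l ++ z := by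
  obtain ⟨t, rfl⟩ := h; exact ⟨t, by rw [List.append_assoc]⟩

lemma occAt {m r : ℕ} {W : List ℕ} (hm : m < x) (hr : r ≤ m + 1)
    (h : W <+: List.replicate (m + 1 - r) a ++ ([b] ++ (SxL a b x).drop (triN (m + 1)))) :
    triN m + r ∈ Pset (Tx a b x) W := by
  have h1 : triN (m + 1) ≤ triN x := triN_mono (by omega)
  have h2 : triN (m + 1) = triN m + (m + 2) := rfl
  exact mem_Pset_of a b x (by omega) (by rw [dropDec a b hm hr]; exact h)

lemma le_triN : ∀ y : ℕ, y ≤ triN y := by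
  intro y
  induction y with
  | zero => simp [triN]
  | succ k ih => simp [triN]; omega

lemma suffix_SxL {i : ℕ} (hi : i ≤ x) (hx : 0 < x) :
    List.replicate i a ++ [b] <:+ SxL a b x := by
  obtain ⟨y, rfl⟩ : ∃ y, x = y + 1 := ⟨x - 1, by omega⟩
  rw [SxL_succ]
  have h1 : List.replicate i a ++ [b] <:+ List.replicate (y + 1) a ++ [b] :=
    ⟨List.replicate (y + 1 - i) a, by
      rw [← List.append_assoc, ← List.replicate_add, show y + 1 - i + i = y + 1 by omega]⟩
  exact h1.trans (List.suffix_append _ _)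

section families
variable (ha : 1 ≤ a) (hab : a < b) (hx : 3 ≤ x)
include ha hab hx

lemma family1_mem {i : ℕ} (h1 : 1 ≤ i) (h2 : i ≤ x - 1) :
    List.replicate i a ++ [b] ∈ MaxRepeats (Tx a b x) := by
  have hb : 1 ≤ b := by omega
  obtain ⟨k, rfl⟩ : ∃ k, i = k + 1 := ⟨i - 1, by omega⟩
  have hkx : k + 1 < x := by omega
  set W := List.replicate (k + 1) a ++ [b] with hW
  -- occurrence windows
  have hocc1 : triN k + 0 ∈ Pset (Tx a b x) W :=
    occAt a b x (m := k) (r := 0) (by omega) (by omega)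
      (by rw [show k + 1 - 0 = k + 1 by omega, ← List.append_assoc]
          exact List.prefix_append _ _)
  have hocc2 : triN (k + 1) + 1 ∈ Pset (Tx a b x) W :=
    occAt a b x (m := k + 1) (r := 1) hkx (by omega)
      (by rw [show k + 1 + 1 - 1 = k + 1 by omega, ← List.append_assoc]
          exact List.prefix_append _ _)
  simp only [MaxRepeats, Finset.mem_filter]
  refine ⟨?_, by simp [hW], ?_, ?_, ?_⟩
  · -- circSubstrings
    obtain ⟨hlt, hpre⟩ := of_mem_Pset a b x ha hb (by simp [hW]) (by simp [hW]; omega) hocc1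
    exact mem_circSubstrings_of a b x hlt hpre
  · -- repeat
    refine Finset.one_lt_card.mpr ⟨_, hocc1, _, hocc2, ?_⟩
    have := triN_lt_succ k
    omega
  · -- left maximal
    have haS : a ∈ SigmaL (Tx a b x) W := by
      rw [mem_SigmaL]
      refine ⟨a_mem_Tx a b x (by omega), triN (k + 1) + 0, ?_⟩
      refine occAt a b x (m := k + 1) (r := 0) hkx (by omega) ?_
      rw [show k + 1 + 1 - 0 = k + 2 by omega]
      show List.replicate (k + 2) a ++ [b] <+: _
      rw [← List.append_assoc]
      exact List.prefix_append _ _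
    rcases Nat.eq_zero_or_pos k with rfl | hk
    · -- second char: 0
      have h0S : (0 : ℕ) ∈ SigmaL (Tx a b x) W := by
        rw [mem_SigmaL]
        refine ⟨zero_mem_Tx a b x, ?_⟩
        rw [occursCirc_cons_zero a b x ha hb (by
          have h9 := le_triN x
          simp [hW]; omega)]
        rw [SxL_head a b x (by omega)]
        exact (List.prefix_append _ _)
      exact Finset.one_lt_card.mpr ⟨_, haS, _, h0S, by omega⟩
    · -- second char: b
      obtain ⟨k', rfl⟩ : ∃ k', k = k' + 1 := ⟨k - 1, by omega⟩
      have hbS : b ∈ SigmaL (Tx a b x) W := by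
        rw [mem_SigmaL]
        refine ⟨b_mem_Tx a b x (by omega), triN k' + (k' + 1), ?_⟩
        refine occAt a b x (m := k') (r := k' + 1) (by omega) (by omega) ?_
        rw [show k' + 1 - (k' + 1) = 0 by omega, List.replicate_zero, List.nil_append,
          drop_triN a b (show k' + 1 < x by omega)]
        rw [List.singleton_append, hW, List.append_assoc]
        exact List.cons_prefix_cons.mpr ⟨rfl, prefAppendLeft (List.prefix_append _ _)⟩
      exact Finset.one_lt_card.mpr ⟨_, haS, _, hbS, by omega⟩
  · -- right maximal
    have haS : a ∈ SigmaR (Tx a b x) W := by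
      rw [mem_SigmaR]
      refine ⟨a_mem_Tx a b x (by omega), triN k + 0, ?_⟩
      refine occAt a b x (m := k) (r := 0) (by omega) (by omega) ?_
      rw [show k + 1 - 0 = k + 1 by omega, drop_triN a b hkx, hW]
      simp only [List.append_assoc]
      apply prefAppendLeft
      apply prefAppendLeft
      have := PM2' (a := a) (b := b) (j := 1) (u := k + 2)
        (Z := (SxL a b x).drop (triN (k + 2))) (by omega)
      rw [List.append_assoc] at this
      simpa using this
    have h0S : (0 : ℕ) ∈ SigmaR (Tx a b x) W := by
      rw [mem_SigmaR]
      refine ⟨zero_mem_Tx a b x, ?_⟩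
      rw [occursCirc_append_zero a b x ha hb (by
        have h9 := le_triN x
        simp [hW]; omega)]
      exact suffix_SxL a b x (by omega) (by omega)
    exact Finset.one_lt_card.mpr ⟨_, haS, _, h0S, by omega⟩

lemma family2_mem {j : ℕ} (h1 : 1 ≤ j) (h2 : j ≤ x - 1) :
    List.replicate j a ∈ MaxRepeats (Tx a b x) := by
  have hb : 1 ≤ b := by omega
  obtain ⟨z, rfl⟩ : ∃ z, x = z + 2 := ⟨x - 2, by omega⟩
  set y := z + 1 with hy
  have hjy : j ≤ y := by omega
  set W := List.replicate j a with hW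
  have hWa : ∀ u Z, j ≤ u →
      W <+: List.replicate u a ++ ([b] ++ Z) := by
    intro u Z hu
    have := PM2' (a := a) (b := b) (j := j) (u := u) (Z := Z) hu
    rwa [List.append_assoc] at this
  have hocc1 : triN y + 0 ∈ Pset (Tx a b (y + 1)) W :=
    occAt a b _ (m := y) (r := 0) (by omega) (by omega) (hWa _ _ (by omega))
  have hocc2 : triN y + 1 ∈ Pset (Tx a b (y + 1)) W :=
    occAt a b _ (m := y) (r := 1) (by omega) (by omega) (hWa _ _ (by omega))
  simp only [MaxRepeats, Finset.mem_filter]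
  refine ⟨?_, by simp [hW]; omega, ?_, ?_, ?_⟩
  · obtain ⟨hlt, hpre⟩ := of_mem_Pset a b _ ha hb
      (by simp [hW]; omega) (by simp [hW]; omega) hocc1
    exact mem_circSubstrings_of a b _ hlt hpre
  · exact Finset.one_lt_card.mpr ⟨_, hocc1, _, hocc2, by omega⟩
  · -- left maximal
    have haS : a ∈ SigmaL (Tx a b (y + 1)) W := by
      rw [mem_SigmaL]
      refine ⟨a_mem_Tx a b _ (by omega), triN y + 0, ?_⟩
      refine occAt a b _ (m := y) (r := 0) (by omega) (by omega) ?_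
      show List.replicate (j + 1) a <+: _
      have := PM2' (a := a) (b := b) (j := j + 1) (u := y + 1 - 0)
        (Z := (SxL a b (y+1)).drop (triN (y+1))) (by omega)
      rwa [List.append_assoc] at this
    have hbS : b ∈ SigmaL (Tx a b (y + 1)) W := by
      rw [mem_SigmaL]
      refine ⟨b_mem_Tx a b _ (by omega), triN z + (z + 1), ?_⟩
      refine occAt a b _ (m := z) (r := z + 1) (by omega) (by omega) ?_
      rw [show z + 1 - (z + 1) = 0 by omega, List.replicate_zero, List.nil_append,
        drop_triN a b (show z + 1 < y + 1 by omega), List.singleton_append]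
      refine List.cons_prefix_cons.mpr ⟨rfl, ?_⟩
      exact PM2' (a := a) (b := b) (by omega)
    exact Finset.one_lt_card.mpr ⟨_, haS, _, hbS, by omega⟩
  · -- right maximal
    have haS : a ∈ SigmaR (Tx a b (y + 1)) W := by
      rw [mem_SigmaR]
      refine ⟨a_mem_Tx a b _ (by omega), triN y + 0, ?_⟩
      refine occAt a b _ (m := y) (r := 0) (by omega) (by omega) ?_
      rw [hW, ← List.replicate_succ']
      have := PM2' (a := a) (b := b) (j := j + 1) (u := y + 1 - 0)
        (Z := (SxL a b (y+1)).drop (triN (y+1))) (by omega)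
      rwa [List.append_assoc] at this
    have hbS : b ∈ SigmaR (Tx a b (y + 1)) W := by
      rw [mem_SigmaR]
      refine ⟨b_mem_Tx a b _ (by omega), triN y + (y + 1 - j), ?_⟩
      refine occAt a b _ (m := y) (r := y + 1 - j) (by omega) (by omega) ?_
      rw [show y + 1 - (y + 1 - j) = j by omega, hW, ← List.append_assoc]
      exact List.prefix_append _ _
    exact Finset.one_lt_card.mpr ⟨_, haS, _, hbS, by omega⟩

lemma family3_mem {k : ℕ} (h1 : 2 ≤ k) (h2 : k ≤ x - 1) :
    List.replicate (k - 1) a ++ [b] ++ List.replicate k a ∈ MaxRepeats (Tx a b x) := by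
  have hb : 1 ≤ b := by omega
  obtain ⟨t, rfl⟩ : ∃ t, k = t + 2 := ⟨k - 2, by omega⟩
  rw [show t + 2 - 1 = t + 1 by omega]
  have htx : t + 3 ≤ x := by omega
  set W := List.replicate (t + 1) a ++ [b] ++ List.replicate (t + 2) a with hW
  have hocc1 : triN t + 0 ∈ Pset (Tx a b x) W := by
    refine occAt a b x (m := t) (r := 0) (by omega) (by omega) ?_
    rw [show t + 1 - 0 = t + 1 by omega, drop_triN a b (show t + 1 < x by omega), hW]
    simp only [List.append_assoc]
    apply prefAppendLeft; apply prefAppendLeft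
    exact List.prefix_append _ _
  have hocc2 : triN (t + 1) + 1 ∈ Pset (Tx a b x) W := by
    refine occAt a b x (m := t + 1) (r := 1) (by omega) (by omega) ?_
    rw [show t + 1 + 1 - 1 = t + 1 by omega, drop_triN a b (show t + 2 < x by omega), hW]
    simp only [List.append_assoc]
    apply prefAppendLeft; apply prefAppendLeft
    have := PM2' (a := a) (b := b) (j := t + 2) (u := t + 3)
      (Z := (SxL a b x).drop (triN (t + 3))) (by omega)
    rwa [List.append_assoc] at this
  simp only [MaxRepeats, Finset.mem_filter]
  refine ⟨?_, by simp [hW], ?_, ?_, ?_⟩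
  · obtain ⟨hlt, hpre⟩ := of_mem_Pset a b x ha hb
      (by simp [hW]) (by simp [hW]; omega) hocc1
    exact mem_circSubstrings_of a b x hlt hpre
  · refine Finset.one_lt_card.mpr ⟨_, hocc1, _, hocc2, ?_⟩
    have := triN_lt_succ t
    omega
  · -- left maximal
    have haS : a ∈ SigmaL (Tx a b x) W := by
      rw [mem_SigmaL]
      refine ⟨a_mem_Tx a b x (by omega), triN (t + 1) + 0, ?_⟩
      refine occAt a b x (m := t + 1) (r := 0) (by omega) (by omega) ?_
      have he : a :: W = List.replicate (t + 2) a ++ ([b] ++ List.replicate (t + 2) a) := by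
        simp [hW, List.replicate_succ]
      rw [he, show t + 1 + 1 - 0 = t + 2 by omega,
        drop_triN a b (show t + 2 < x by omega)]
      simp only [List.append_assoc]
      apply prefAppendLeft; apply prefAppendLeft
      have := PM2' (a := a) (b := b) (j := t + 2) (u := t + 3)
        (Z := (SxL a b x).drop (triN (t + 3))) (by omega)
      rwa [List.append_assoc] at this
    have hsnd : ∃ c, c ∈ SigmaL (Tx a b x) W ∧ c ≠ a := by
      match t with
      | 0 =>
        refine ⟨0, ?_, by omega⟩
        rw [mem_SigmaL]
        refine ⟨zero_mem_Tx a b x, ?_⟩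
        rw [occursCirc_cons_zero a b x ha hb (by
          have h9 := triN_mono (show 3 ≤ x by omega)
          rw [show triN 3 = 9 from rfl] at h9
          simp [hW]; omega)]
        have hS : SxL a b x = List.replicate 1 a ++ [b] ++ (SxL a b x).drop (triN 1) :=
          SxL_head a b x (by omega)
        rw [hS, drop_triN a b (show 1 < x by omega), hW]
        simp only [List.append_assoc]
        apply prefAppendLeft; apply prefAppendLeft
        exact List.prefix_append _ _
      | u + 1 =>
        refine ⟨b, ?_, by omega⟩
        rw [mem_SigmaL]
        refine ⟨b_mem_Tx a b x (by omega), triN u + (u + 1), ?_⟩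
        refine occAt a b x (m := u) (r := u + 1) (by omega) (by omega) ?_
        rw [show u + 1 - (u + 1) = 0 by omega, List.replicate_zero, List.nil_append,
          drop_triN a b (show u + 1 < x by omega), List.singleton_append,
          drop_triN a b (show u + 2 < x by omega), hW]
        refine List.cons_prefix_cons.mpr ⟨rfl, ?_⟩
        simp only [List.append_assoc]
        apply prefAppendLeft; apply prefAppendLeft
        exact List.prefix_append _ _
    obtain ⟨c, hc1, hc2⟩ := hsnd
    exact Finset.one_lt_card.mpr ⟨_, haS, _, hc1, fun h => hc2 h.symm⟩
  · -- right maximal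
    have haS : a ∈ SigmaR (Tx a b x) W := by
      rw [mem_SigmaR]
      refine ⟨a_mem_Tx a b x (by omega), triN (t + 1) + 1, ?_⟩
      refine occAt a b x (m := t + 1) (r := 1) (by omega) (by omega) ?_
      have he : W ++ [a] = List.replicate (t + 1) a ++ ([b] ++ List.replicate (t + 3) a) := by
        simp [hW, List.replicate_succ', List.append_assoc]
      rw [he, show t + 1 + 1 - 1 = t + 1 by omega,
        drop_triN a b (show t + 2 < x by omega)]
      simp only [List.append_assoc]
      apply prefAppendLeft; apply prefAppendLeft
      have := PM2' (a := a) (b := b) (j := t + 3) (u := t + 3)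
        (Z := (SxL a b x).drop (triN (t + 3))) (by omega)
      rwa [List.append_assoc] at this
    have hbS : b ∈ SigmaR (Tx a b x) W := by
      rw [mem_SigmaR]
      refine ⟨b_mem_Tx a b x (by omega), triN t + 0, ?_⟩
      refine occAt a b x (m := t) (r := 0) (by omega) (by omega) ?_
      rw [show t + 1 - 0 = t + 1 by omega, drop_triN a b (show t + 1 < x by omega), hW]
      simp only [List.append_assoc]
      apply prefAppendLeft; apply prefAppendLeft
      rw [← List.append_assoc]
      exact List.prefix_append _ _
    exact Finset.one_lt_card.mpr ⟨_, haS, _, hbS, by omega⟩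

end families

lemma suffix_not_a {V : List ℕ} (hxpos : 0 < x) (hne : a ≠ b)
    (h : V ++ [a] <:+ SxL a b x) : False := by
  obtain ⟨y, rfl⟩ : ∃ y, x = y + 1 := ⟨x - 1, by omega⟩
  rw [SxL_succ] at h
  obtain ⟨t, ht⟩ := h
  have := congrArg List.getLast? ht
  rw [List.getLast?_append, List.getLast?_concat, ← List.append_assoc,
    List.getLast?_concat] at this
  simp at this
  exact hne this

lemma decode {i : ℕ} {W : List ℕ} (hi : i < triN x)
    (h : W <+: (SxL a b x).drop i) :
    ∃ m r, m < x ∧ r ≤ m + 1 ∧ i = triN m + r ∧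
      W <+: List.replicate (m + 1 - r) a ++ ([b] ++ (SxL a b x).drop (triN (m + 1))) := by
  obtain ⟨m, r, h1, h2, rfl⟩ := idx_decompose hi
  exact ⟨m, r, h1, h2, rfl, by rwa [dropDec a b h1 h2] at h⟩

lemma occ_decode (ha : 1 ≤ a) (hb : 1 ≤ b) {V : List ℕ} (hV : V ≠ [])
    (h0 : (0:ℕ) ∉ V) (h : OccursCirc (Tx a b x) V) :
    ∃ m r, m < x ∧ r ≤ m + 1 ∧
      V <+: List.replicate (m + 1 - r) a ++ ([b] ++ (SxL a b x).drop (triN (m + 1))) := by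
  obtain ⟨i, hi, hp⟩ := (occursCirc_iff a b x ha hb hV h0).mp h
  obtain ⟨m, r, h1, h2, _, h4⟩ := decode a b x hi hp
  exact ⟨m, r, h1, h2, h4⟩

lemma assocR {u : ℕ} {Z : List ℕ} :
    List.replicate u a ++ ([b] ++ Z) = List.replicate u a ++ [b] ++ Z :=
  (List.append_assoc _ _ _).symm

lemma hard_direction (ha : 1 ≤ a) (hab : a < b) (hx : 3 ≤ x) {W : List ℕ}
    (hM : W ∈ MaxRepeats (Tx a b x)) :
    (∃ i, 1 ≤ i ∧ i ≤ x - 1 ∧ W = List.replicate i a ++ [b]) ∨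
    (∃ j, 1 ≤ j ∧ j ≤ x - 1 ∧ W = List.replicate j a) ∨
    (∃ k, 2 ≤ k ∧ k ≤ x - 1 ∧
      W = List.replicate (k - 1) a ++ [b] ++ List.replicate k a) := by
  have hb : 1 ≤ b := by omega
  have hne : a ≠ b := by omega
  simp only [MaxRepeats, Finset.mem_filter] at hM
  obtain ⟨hcs, hWne, hcard, hlm, hrm⟩ := hM
  have hlm' : 1 < (SigmaL (Tx a b x) W).card := hlm
  have hrm' : 1 < (SigmaR (Tx a b x) W).card := hrm
  -- Step 1 : no zero in W
  have h0W : (0:ℕ) ∉ W := by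
    intro h0
    obtain ⟨i₁, hi₁, i₂, hi₂, hne12⟩ := Finset.one_lt_card.mp hcard
    obtain ⟨jj, hjj, hj0⟩ := List.getElem_of_mem h0
    simp only [Pset, Finset.mem_filter, Finset.mem_range, Tx_length] at hi₁ hi₂
    have e₁ := hi₁.2 jj hjj
    have e₂ := hi₂.2 jj hjj
    rw [List.getD_eq_getElem _ _ hjj, hj0, Tx_length] at e₁ e₂
    have m₁ : (i₁ + jj) % (triN x + 1) = triN x := by
      by_contra hc
      have hlt := Nat.mod_lt (i₁ + jj) (y := triN x + 1) (by omega)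
      exact getD_Tx_ne_zero a b x ha hb (by omega) e₁.symm
    have m₂ : (i₂ + jj) % (triN x + 1) = triN x := by
      by_contra hc
      have hlt := Nat.mod_lt (i₂ + jj) (y := triN x + 1) (by omega)
      exact getD_Tx_ne_zero a b x ha hb (by omega) e₂.symm
    have hmod : i₁ % (triN x + 1) = i₂ % (triN x + 1) :=
      Nat.ModEq.add_right_cancel' jj (m₁.trans m₂.symm)
    rw [Nat.mod_eq_of_lt hi₁.1, Nat.mod_eq_of_lt hi₂.1] at hmod
    exact hne12 hmod
  -- Step 2 : two linear occurrences
  obtain ⟨i₁, hi₁, i₂, hi₂, hne12⟩ := Finset.one_lt_card.mp hcard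
  obtain ⟨hilt₁, hp₁⟩ := of_mem_Pset a b x ha hb hWne h0W hi₁
  obtain ⟨hilt₂, hp₂⟩ := of_mem_Pset a b x ha hb hWne h0W hi₂
  have hWlen : W.length ≤ triN x := by
    have := hp₁.length_le
    rw [List.length_drop, SxL_length] at this
    omega
  have hch : ∀ c ∈ W, c = a ∨ c = b := fun c hc =>
    mem_SxL a b (List.drop_subset _ _ (hp₁.subset hc))
  rcases shape a b W hch with ⟨j, rfl⟩ | ⟨p, s, rfl⟩ | ⟨p, q, R, rfl⟩
  · -- Case A : W = aʲ
    have hj1 : 1 ≤ j := by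
      rcases Nat.eq_zero_or_pos j with rfl | h
      · simp at hWne
      · omega
    refine Or.inr (Or.inl ⟨j, hj1, ?_, rfl⟩)
    have hsub : SigmaR (Tx a b x) (List.replicate j a) ⊆ {a, b} := by
      intro c hc
      rw [mem_SigmaR] at hc
      obtain ⟨hcT, hocc⟩ := hc
      rcases mem_Tx a b x hcT with rfl | rfl | rfl
      · simp
      · simp
      · exfalso
        rw [occursCirc_append_zero a b x ha hb (by simpa using hWlen)] at hocc
        obtain ⟨j', rfl⟩ : ∃ j', j = j' + 1 := ⟨j - 1, by omega⟩
        rw [List.replicate_succ'] at hocc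
        exact suffix_not_a a b x (by omega) hne hocc
    have heq : SigmaR (Tx a b x) (List.replicate j a) = {a, b} :=
      Finset.eq_of_subset_of_card_le hsub (by rw [Finset.card_pair hne]; omega)
    have haR : a ∈ SigmaR (Tx a b x) (List.replicate j a) := by rw [heq]; simp
    rw [mem_SigmaR] at haR
    have hocc := haR.2
    rw [← List.replicate_succ'] at hocc
    obtain ⟨m, r, hm, hr, hpre⟩ := occ_decode a b x ha hb (by simp)
      (by simp [List.mem_replicate]; omega) hocc
    rw [← List.append_assoc] at hpre
    have := PM2 hne hpre
    omega
  · -- Case B : W = aᵖ b aˢ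
    obtain ⟨m₁, r₁, hm₁, hr₁, hieq₁, hpre₁⟩ := decode a b x hilt₁ hp₁
    rw [← List.append_assoc] at hpre₁
    obtain ⟨hpm₁, hps₁⟩ := PM1 hne hpre₁
    rcases Nat.eq_zero_or_pos s with rfl | hs
    · -- subcase s = 0 : W = aᵖ b
      have hp1 : 1 ≤ p := by
        by_contra hp0
        have hp0' : p = 0 := by omega
        subst hp0'
        simp only [List.replicate_zero, List.nil_append, List.append_nil] at hlm'
        have hsub : SigmaL (Tx a b x) [b] ⊆ {a} := by
          intro c hc
          rw [mem_SigmaL] at hc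
          obtain ⟨hcT, hocc⟩ := hc
          rcases mem_Tx a b x hcT with h | h | h
          · rw [h]; simp
          · exfalso
            rw [h] at hocc
            have he : (b :: [b] : List ℕ) = List.replicate 0 a ++ [b] ++ [b] := by simp
            rw [he] at hocc
            obtain ⟨m, r, hm, hr, hpre⟩ := occ_decode a b x
              (V := List.replicate 0 a ++ [b] ++ [b]) ha hb (by simp)
              (by simp; omega) hocc
            rw [← List.append_assoc] at hpre
            obtain ⟨h01, hb1⟩ := PM1 hne hpre
            rcases Nat.lt_or_ge (m + 1) x with hlt | hge
            · rw [drop_triN a b hlt] at hb1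
              rw [show ([b] : List ℕ) = List.replicate 0 a ++ [b] ++ [] by simp] at hb1
              obtain ⟨h02, -⟩ := PM1 hne hb1
              omega
            · have hmx : m + 1 = x := by omega
              rw [hmx, drop_triN_top] at hb1
              have := hb1.length_le
              simp at this
          · exfalso
            rw [h] at hocc
            rw [occursCirc_cons_zero a b x ha hb (by
              have := le_triN x; simp; omega)] at hocc
            rw [SxL_head a b x (by omega),
              show ([b] : List ℕ) = List.replicate 0 a ++ [b] ++ [] by simp] at hocc
            obtain ⟨h01, -⟩ := PM1 hne hocc
            omega
        have := Finset.card_le_card hsub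
        simp at this
        omega
      obtain ⟨m₂, r₂, hm₂, hr₂, hieq₂, hpre₂⟩ := decode a b x hilt₂ hp₂
      rw [← List.append_assoc] at hpre₂
      obtain ⟨hpm₂, -⟩ := PM1 hne hpre₂
      have hplt : p ≤ x - 1 := by
        by_contra hc
        push_neg at hc
        have e1 : m₁ = x - 1 ∧ r₁ = 0 := by omega
        have e2 : m₂ = x - 1 ∧ r₂ = 0 := by omega
        apply hne12
        rw [hieq₁, hieq₂, e1.1, e1.2, e2.1, e2.2]
      exact Or.inl ⟨p, hp1, hplt, by simp⟩
    · -- subcase s ≥ 1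
      set W := List.replicate p a ++ [b] ++ List.replicate s a with hW
      -- SigmaR = {a, b}
      have hsubR : SigmaR (Tx a b x) W ⊆ {a, b} := by
        intro c hc
        rw [mem_SigmaR] at hc
        obtain ⟨hcT, hocc⟩ := hc
        rcases mem_Tx a b x hcT with h | h | h
        · rw [h]; simp
        · rw [h]; simp
        · exfalso
          rw [h] at hocc
          rw [occursCirc_append_zero a b x ha hb hWlen] at hocc
          obtain ⟨s', rfl⟩ : ∃ s', s = s' + 1 := ⟨s - 1, by omega⟩
          rw [hW, List.replicate_succ', ← List.append_assoc] at hocc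
          exact suffix_not_a a b x (by omega) hne hocc
      have heqR : SigmaR (Tx a b x) W = {a, b} :=
        Finset.eq_of_subset_of_card_le hsubR (by rw [Finset.card_pair hne]; omega)
      -- b - extension : s = m+2 for some occurrence
      have hbR : b ∈ SigmaR (Tx a b x) W := by rw [heqR]; simp
      rw [mem_SigmaR] at hbR
      have hoccb := hbR.2
      have heb : W ++ [b]
          = List.replicate p a ++ [b] ++ (List.replicate s a ++ [b]) := by
        simp [hW]
      rw [heb] at hoccb
      obtain ⟨m, r, hm, hr, hpre⟩ := occ_decode a b x
        (V := List.replicate p a ++ [b] ++ (List.replicate s a ++ [b])) ha hb (by simp)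
        (by simp [List.mem_replicate]; omega) hoccb
      rw [assocR] at hpre
      obtain ⟨hpm, hps⟩ := PM1 hne hpre
      have hs2 : 2 ≤ s ∧ p ≤ s - 1 := by
        rcases Nat.lt_or_ge (m + 1) x with hlt | hge
        · rw [drop_triN a b hlt] at hps
          rw [show List.replicate s a ++ [b]
              = List.replicate s a ++ [b] ++ [] by simp] at hps
          obtain ⟨hsm, -⟩ := PM1 hne hps
          omega
        · have hmx : m + 1 = x := by omega
          rw [hmx, drop_triN_top] at hps
          have := hps.length_le
          simp at this
      -- a - extension : s ≤ x - 1
      have haR : a ∈ SigmaR (Tx a b x) W := by rw [heqR]; simp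
      rw [mem_SigmaR] at haR
      have hocca := haR.2
      have hea : W ++ [a]
          = List.replicate p a ++ [b] ++ List.replicate (s + 1) a := by
        simp [hW, List.replicate_succ']
      rw [hea] at hocca
      obtain ⟨m', r', hm', hr', hpre'⟩ := occ_decode a b x
        (V := List.replicate p a ++ [b] ++ List.replicate (s + 1) a) ha hb (by simp)
        (by simp [List.mem_replicate]; omega) hocca
      rw [← List.append_assoc] at hpre'
      obtain ⟨hpm', hps'⟩ := PM1 hne hpre'
      have hsx : s ≤ x - 1 := by
        rcases Nat.lt_or_ge (m' + 1) x with hlt | hge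
        · rw [drop_triN a b hlt] at hps'
          have := PM2 hne hps'
          omega
        · have hmx : m' + 1 = x := by omega
          rw [hmx, drop_triN_top] at hps'
          have := hps'.length_le
          simp at this
      -- left-maximality : some c ≠ a in SigmaL
      have hexc : ∃ c ∈ SigmaL (Tx a b x) W, c ≠ a := by
        obtain ⟨c₁, h₁, c₂, h₂, h12⟩ := Finset.one_lt_card.mp hlm'
        by_cases hc : c₁ = a
        · exact ⟨c₂, h₂, fun h => h12 (by rw [hc, h])⟩
        · exact ⟨c₁, h₁, hc⟩
      obtain ⟨c, hcS, hca⟩ := hexc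
      rw [mem_SigmaL] at hcS
      obtain ⟨hcT, hocc⟩ := hcS
      have hsle : s ≤ p + 1 := by
        rcases mem_Tx a b x hcT with h | h | h
        · exact absurd h hca
        · -- b·W occurs
          rw [h] at hocc
          rw [show b :: W = List.replicate 0 a ++ [b] ++ W by simp [hW]] at hocc
          obtain ⟨m'', r'', hm'', hr'', hpre''⟩ := occ_decode a b x
            (V := List.replicate 0 a ++ [b] ++ W) ha hb (by simp [hW])
            (by
              simp only [List.replicate_zero, List.nil_append]
              intro hc0
              rcases List.mem_cons.mp hc0 with h' | h'
              · omega
              · exact h0W h') hocc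
          rw [assocR] at hpre''
          obtain ⟨h0m, hWZ⟩ := PM1 hne hpre''
          rcases Nat.lt_or_ge (m'' + 1) x with hlt | hge
          · rw [drop_triN a b hlt] at hWZ
            rw [hW] at hWZ
            obtain ⟨hpm2, hsZ⟩ := PM1 hne hWZ
            rcases Nat.lt_or_ge (m'' + 2) x with hlt2 | hge2
            · rw [drop_triN a b hlt2] at hsZ
              have := PM2 hne hsZ
              omega
            · have hmx : m'' + 2 = x := by omega
              rw [hmx, drop_triN_top, List.prefix_nil] at hsZ
              have := congrArg List.length hsZ
              simp at this
              omega
          · have hmx : m'' + 1 = x := by omega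
            rw [hmx, drop_triN_top, List.prefix_nil] at hWZ
            simp [hW] at hWZ
        · -- 0·W occurs
          rw [h] at hocc
          rw [occursCirc_cons_zero a b x ha hb hWlen] at hocc
          rw [SxL_head a b x (by omega), hW] at hocc
          obtain ⟨hp1', hsZ⟩ := PM1 hne hocc
          rw [drop_triN a b (show 1 < x by omega)] at hsZ
          have := PM2 hne hsZ
          omega
      refine Or.inr (Or.inr ⟨s, by omega, hsx, ?_⟩)
      rw [hW, show p = s - 1 by omega]
  · -- Case C : two bs, contradiction
    exfalso
    obtain ⟨m₁, r₁, hm₁, hr₁, hieq₁, hpre₁⟩ := decode a b x hilt₁ hp₁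
    obtain ⟨m₂, r₂, hm₂, hr₂, hieq₂, hpre₂⟩ := decode a b x hilt₂ hp₂
    rw [assocR, assocR] at hpre₁
    rw [assocR, assocR] at hpre₂
    obtain ⟨hpm₁, hq₁⟩ := PM1 hne hpre₁
    obtain ⟨hpm₂, hq₂⟩ := PM1 hne hpre₂
    have key : ∀ m : ℕ, m < x →
        List.replicate q a ++ [b] ++ R <+: (SxL a b x).drop (triN (m + 1)) →
        q = m + 2 := by
      intro m hm hq
      rcases Nat.lt_or_ge (m + 1) x with hlt | hge
      · rw [drop_triN a b hlt] at hq
        exact (PM1 hne hq).1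
      · have hmx : m + 1 = x := by omega
        rw [hmx, drop_triN_top, List.prefix_nil] at hq
        simp at hq
    have e₁ := key m₁ hm₁ hq₁
    have e₂ := key m₂ hm₂ hq₂
    have hm12 : m₁ = m₂ := by omega
    have hr12 : r₁ = r₂ := by omega
    exact hne12 (by rw [hieq₁, hieq₂, hm12, hr12])

end TxProof


/-- For distinct characters `a < b` of `Σ` and `x ≥ 3`, the set of
nonempty maximal repeats of `T_x = a b a² b ⋯ aˣ b #` is exactly
`{aⁱb : i ∈ [1..x−1]} ∪ {aʲ : j ∈ [1..x−1]} ∪ {aᵏ⁻¹baᵏ : k ∈ [2..x−1]}`. -/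
theorem maxRepeats_of_Tx (a b x : ℕ) (ha : 1 ≤ a) (hab : a < b) (hx : 3 ≤ x) :
    MaxRepeats (Tx a b x) =
      ((Finset.Icc 1 (x - 1)).image (fun i => List.replicate i a ++ [b])) ∪
      ((Finset.Icc 1 (x - 1)).image (fun j => List.replicate j a)) ∪
      ((Finset.Icc 2 (x - 1)).image
        (fun k => List.replicate (k - 1) a ++ [b] ++ List.replicate k a)) := by
  ext W
  simp only [Finset.mem_union, Finset.mem_image, Finset.mem_Icc]
  constructor
  · intro hM
    rcases TxProof.hard_direction a b x ha hab hx hM with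
      ⟨i, h1, h2, rfl⟩ | ⟨j, h1, h2, rfl⟩ | ⟨k, h1, h2, rfl⟩
    · exact Or.inl (Or.inl ⟨i, ⟨h1, h2⟩, rfl⟩)
    · exact Or.inl (Or.inr ⟨j, ⟨h1, h2⟩, rfl⟩)
    · exact Or.inr ⟨k, ⟨h1, h2⟩, rfl⟩
  · intro h
    rcases h with (⟨i, ⟨h1, h2⟩, rfl⟩ | ⟨j, ⟨h1, h2⟩, rfl⟩) | ⟨k, ⟨h1, h2⟩, rfl⟩
    · exact TxProof.family1_mem a b x ha hab hx h1 h2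
    · exact TxProof.family2_mem a b x ha hab hx h1 h2
    · exact TxProof.family3_mem a b x ha hab hx h1 h2
end
end

section
/- Let a < b be two distinct characters of Σ, let x ≥ 2, and let T_x = a b a^2 b a^3 b ⋯ a^x b # (of length x(x+3)/2 + 1). The LZ77 factorization of T_x has exactly x + 3 factors: z_{T_x} = x + 3. -/
/-! Basic definitions: strings are lists of naturals; the separator `#` is `0`;
the alphabet is `Σ = [1..σ]`. Occurrences are taken in the circular version of `T`. -/

noncomputable section
open Classical

/-! The LZ77 factorization of `T_x` is `a | b | a | a b a² | a b a³ | ⋯ | a b aˣ⁻¹ | a b | #`.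
Every occurrence of `a b` in `T_x` is followed by a complete tail `aⁿ b aⁿ⁺¹ b ⋯ #` of blocks, so
`a b aᵐ⁺¹` first occurs at the last `a` of the block `aᵐ`, exactly where the factor `a b aᵐ` starts;
this makes each factor `a b aᵐ` (and `a b`, before `#`) maximal, while its earlier occurrence one
block before makes it admissible. The greedy factor at a position depends only on the remaining
suffix, so the LZ77 factorization is unique. -/

namespace LZ77

section Factorization

variable {T R F G : List ℕ}

/-- Positions of `T` are encoded by the suffixes starting there: `S` starts before `R` iff it is
longer. -/
def HasEarlierSource (T R F : List ℕ) : Prop :=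
  ∃ S, S <:+ T ∧ R.length < S.length ∧ F <+: S

theorem hasEarlierSource_drop_iff {k : ℕ} (hk : k ≤ T.length) :
    HasEarlierSource T (T.drop k) F ↔ ∃ j < k, F <+: T.drop j := by
  constructor
  · rintro ⟨S, hS, hlen, hF⟩
    refine ⟨T.length - S.length, ?_, List.suffix_iff_eq_drop.mp hS ▸ hF⟩
    have := hS.length_le
    simp only [List.length_drop] at hlen
    omega
  · rintro ⟨j, hj, hF⟩
    exact ⟨T.drop j, List.drop_suffix _ _, by simp only [List.length_drop]; omega, hF⟩

def IsGreedyFactor (T R F : List ℕ) : Prop :=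
  F ≠ [] ∧ F <+: R ∧ (F.length = 1 ∨ HasEarlierSource T R F) ∧
    ∀ F', F' <+: R → F.length < F'.length → ¬ HasEarlierSource T R F'

theorem IsGreedyFactor.eq (hF : IsGreedyFactor T R F) (hG : IsGreedyFactor T R G) : F = G := by
  obtain ⟨hF0, hFR, hFsrc, hFmax⟩ := hF
  obtain ⟨hG0, hGR, hGsrc, hGmax⟩ := hG
  have hFpos := List.length_pos_iff.mpr hF0
  have hGpos := List.length_pos_iff.mpr hG0
  have hle : F.length ≤ G.length := by
    by_contra! hlt
    exact hGmax F hFR hlt (hFsrc.resolve_left (by omega))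
  have hge : G.length ≤ F.length := by
    by_contra! hlt
    exact hFmax G hGR hlt (hGsrc.resolve_left (by omega))
  exact (List.prefix_of_prefix_length_le hFR hGR hle).eq_of_length (by omega)

theorem isGreedyFactor_of_append_singleton {c : ℕ} (hF : F ≠ []) (hFc : F ++ [c] <+: R)
    (hsrc : F.length = 1 ∨ HasEarlierSource T R F)
    (hno : ¬ HasEarlierSource T R (F ++ [c])) : IsGreedyFactor T R F := by
  refine ⟨hF, (List.prefix_append F [c]).trans hFc, hsrc, ?_⟩
  rintro F' hF' hlen ⟨S, hS, hSlen, hF'S⟩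
  have hext : F ++ [c] <+: F' := by
    refine List.prefix_of_prefix_length_le hFc hF' ?_
    simp only [List.length_append, List.length_singleton]
    omega
  exact hno ⟨S, hS, hSlen, hext.trans hF'S⟩

theorem isGreedyFactor_singleton_self (c : ℕ) : IsGreedyFactor T [c] [c] := by
  refine ⟨List.cons_ne_nil _ _, List.prefix_refl _, Or.inl rfl, fun F' hF' hlen _ => ?_⟩
  have := hF'.length_le
  simp only [List.length_singleton] at hlen this
  omega

/-- `fs` is the LZ77 factorization of the suffix `R` of `T`. -/
def IsLZ77From (T : List ℕ) : List (List ℕ) → List ℕ → Prop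
  | [], R => R = []
  | F :: fs, R => IsGreedyFactor T R F ∧ IsLZ77From T fs (R.drop F.length)

theorem IsLZ77From.cons {fs : List (List ℕ)} (hF : IsGreedyFactor T (F ++ R) F)
    (hfs : IsLZ77From T fs R) : IsLZ77From T (F :: fs) (F ++ R) :=
  ⟨hF, by rwa [List.drop_left]⟩

theorem IsLZ77From.unique {fs gs : List (List ℕ)} (hfs : IsLZ77From T fs R)
    (hgs : IsLZ77From T gs R) : fs = gs := by
  induction fs generalizing gs R with
  | nil =>
    cases gs with
    | nil => rfl
    | cons G gs => exact absurd (List.prefix_nil.mp (hfs ▸ hgs.1.2.1)) hgs.1.1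
  | cons F fs ih =>
    cases gs with
    | nil => exact absurd (List.prefix_nil.mp (hgs ▸ hfs.1.2.1)) hfs.1.1
    | cons G gs =>
      obtain rfl := hfs.1.eq hgs.1
      rw [ih hfs.2 hgs.2]

theorem isLZ77From_of_isLZ77 {fs : List (List ℕ)} (h : IsLZ77 T fs) : IsLZ77From T fs T := by
  obtain ⟨hflat, hne, hgreedy⟩ := h
  suffices ∀ gs P, fs = P ++ gs → IsLZ77From T gs (T.drop P.flatten.length) by
    simpa using this fs [] rfl
  intro gs
  induction gs with
  | nil =>
    rintro P rfl
    simp only [IsLZ77From, ← hflat, List.append_nil, List.drop_length]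
  | cons F gs ih =>
    rintro P rfl
    have hT : T = P.flatten ++ (F ++ gs.flatten) := by simp [← hflat]
    have hk : P.flatten.length ≤ T.length := by rw [hT]; simp
    have hR : T.drop P.flatten.length = F ++ gs.flatten := by rw [hT, List.drop_left]
    have hsrc_iff (F' : List ℕ) : HasEarlierSource T (F ++ gs.flatten) F' ↔
        ∃ j < P.flatten.length, F' <+: T.drop j := hR ▸ hasEarlierSource_drop_iff hk
    obtain ⟨hsrc, hmax⟩ := hgreedy P.length (by simp)
    simp only [List.take_left, List.get_eq_getElem, List.getElem_append_right le_rfl,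
      Nat.sub_self, List.getElem_cons_zero] at hsrc hmax
    rw [hR]
    refine IsLZ77From.cons ⟨hne F (by simp), List.prefix_append _ _,
      hsrc.imp_right (hsrc_iff F).mpr, fun F' hF' hlen h => ?_⟩ ?_
    · exact hmax F' (hR ▸ hF') hlen (Or.inr ((hsrc_iff F').mp h))
    · have hR' : T.drop (P ++ [F]).flatten.length = gs.flatten := by
        rw [hT, List.flatten_append, List.flatten_singleton, ← List.append_assoc,
          List.drop_left]
      exact hR' ▸ ih (P ++ [F]) (by simp)

end Factorization

section Tx

variable {a b : ℕ}

/-- `blocksFrom a b m c = aᵐ b aᵐ⁺¹ b ⋯ aᵐ⁺ᶜ⁻¹ b #`, so that `Tx a b x = blocksFrom a b 1 x`. -/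
def blocksFrom (a b : ℕ) : ℕ → ℕ → List ℕ
  | _, 0 => [0]
  | m, c + 1 => List.replicate m a ++ b :: blocksFrom a b (m + 1) c

theorem map_range_flatten_append_zero (a b : ℕ) (c k : ℕ) :
    ((List.range c).map (fun i => List.replicate (k + i + 1) a ++ [b])).flatten ++ [0] =
      blocksFrom a b (k + 1) c := by
  induction c generalizing k with
  | zero => rfl
  | succ c ih =>
    rw [List.range_succ_eq_map, List.map_cons, List.map_map, List.flatten_cons,
      List.append_assoc, blocksFrom, ← ih (k + 1)]
    simp [Function.comp_def, Nat.add_right_comm _ 1, Nat.add_assoc]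

theorem Tx_eq_blocksFrom (a b x : ℕ) : Tx a b x = blocksFrom a b 1 x := by
  simpa [Tx] using map_range_flatten_append_zero a b x 0

theorem blocksFrom_add_suffix (a b m k c : ℕ) :
    blocksFrom a b (m + k) c <:+ blocksFrom a b m (k + c) := by
  induction k generalizing m with
  | zero => simp
  | succ k ih =>
    rw [show m + (k + 1) = m + 1 + k by omega, show k + 1 + c = k + c + 1 by omega]
    exact (ih (m + 1)).trans ⟨List.replicate m a ++ [b], by simp [blocksFrom]⟩

theorem ab_blocksFrom_suffix {m : ℕ} (hm : 1 ≤ m) (c : ℕ) :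
    a :: b :: blocksFrom a b (m + 1) c <:+ blocksFrom a b m (c + 1) := by
  obtain ⟨m, rfl⟩ := Nat.exists_eq_add_of_le' hm
  exact ⟨List.replicate m a, by simp [blocksFrom, List.replicate_succ']⟩

theorem eq_of_ab_suffix_replicate_append {S B : List ℕ} (hab : a ≠ b) {q : ℕ}
    (h : a :: b :: S <:+ List.replicate q a ++ b :: B) : S = B ∨ a :: b :: S <:+ B := by
  induction q with
  | zero =>
    rcases List.suffix_cons_iff.mp h with h | h
    · exact absurd (List.cons_eq_cons.mp h).1 hab
    · exact Or.inr h
  | succ q ih =>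
    rcases List.suffix_cons_iff.mp h with h | h
    · rcases q with _ | q
      · exact Or.inl (by simpa using h)
      · simp only [List.replicate_succ, List.append_eq, List.cons_append, List.cons.injEq,
          true_and] at h
        exact absurd h.1.symm hab
    · exact ih h

theorem exists_blocksFrom_of_ab_suffix {S : List ℕ} (hab : a ≠ b) {m c : ℕ}
    (h : a :: b :: S <:+ blocksFrom a b m c) :
    ∃ n k, S = blocksFrom a b n k ∧ m < n ∧ n + k = m + c := by
  induction c generalizing m with
  | zero => simpa [blocksFrom] using h.length_le
  | succ c ih =>
    rcases eq_of_ab_suffix_replicate_append hab h with rfl | h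
    · exact ⟨m + 1, c, rfl, by omega, by omega⟩
    · obtain ⟨n, k, rfl, hn, hk⟩ := ih h
      exact ⟨n, k, rfl, by omega, by omega⟩

theorem le_of_replicate_prefix_blocksFrom (hab : a ≠ b) {n m c : ℕ} (hm : 1 ≤ m)
    (h : List.replicate n a <+: blocksFrom a b m c) : n ≤ m := by
  cases c with
  | zero =>
    have := h.length_le
    simp only [List.length_replicate, blocksFrom, List.length_singleton] at this
    omega
  | succ c =>
    by_contra! hlt
    rw [show n = m + 1 + (n - m - 1) by omega, List.replicate_add, List.replicate_succ',
      blocksFrom, List.append_assoc, List.prefix_append_right_inj] at h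
    simp only [List.cons_append, List.nil_append, List.cons_prefix_cons] at h
    exact hab h.1

theorem length_le_of_ab_replicate_prefix {S : List ℕ} (hab : a ≠ b) {m c n : ℕ}
    (hS : S <:+ blocksFrom a b m c) (hp : a :: b :: List.replicate n a <+: S) :
    S.length ≤ (blocksFrom a b n (m + c - n)).length + 2 := by
  obtain ⟨t, rfl⟩ := hp
  obtain ⟨n', k, hS', hmn', hk⟩ := exists_blocksFrom_of_ab_suffix (S := List.replicate n a ++ t)
    hab (by simpa using hS)
  have hnn' : n ≤ n' :=
    le_of_replicate_prefix_blocksFrom hab (by omega) (hS' ▸ List.prefix_append _ _)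
  have hsuf := blocksFrom_add_suffix a b n (n' - n) k
  rw [Nat.add_sub_cancel' hnn', show n' - n + k = m + c - n by omega] at hsuf
  have hlen := congrArg List.length hS'
  simp only [List.length_append, List.length_replicate] at hlen
  simp only [List.cons_append, List.length_cons, List.length_append, List.length_replicate]
  have := hsuf.length_le
  omega

theorem not_hasEarlierSource_ab_replicate (hab : a ≠ b) {x n c : ℕ} (h : n + c = x + 1) :
    ¬ HasEarlierSource (blocksFrom a b 1 x) (a :: b :: blocksFrom a b n c)
      (a :: b :: List.replicate n a) := by
  rintro ⟨S, hS, hlen, hp⟩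
  have := length_le_of_ab_replicate_prefix hab hS hp
  rw [show 1 + x - n = c by omega] at this
  simp only [List.length_cons] at hlen
  omega

theorem not_hasEarlierSource_ab_zero (ha : a ≠ 0) (hab : a ≠ b) {m c : ℕ} :
    ¬ HasEarlierSource (blocksFrom a b m c) [a, b, 0] [a, b, 0] := by
  rintro ⟨S, hS, hlen, ⟨t, rfl⟩⟩
  obtain ⟨n, k, hS', hmn, -⟩ := exists_blocksFrom_of_ab_suffix (S := 0 :: t) hab (by simpa using hS)
  cases k with
  | zero =>
    simp only [blocksFrom, List.cons.injEq] at hS'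
    simp [hS'.2] at hlen
  | succ k =>
    obtain ⟨n, rfl⟩ := Nat.exists_eq_add_of_lt hmn
    simp only [blocksFrom, List.replicate_succ, List.cons_append, List.cons.injEq] at hS'
    exact ha hS'.1.symm

theorem hasEarlierSource_of_prefix_ab_replicate {F : List ℕ} {x m c : ℕ} (hm : 2 ≤ m)
    (hx : m + c = x) (hF : F <+: a :: b :: List.replicate m a) :
    HasEarlierSource (blocksFrom a b 1 x) (a :: b :: blocksFrom a b (m + 1) c) F := by
  refine ⟨a :: b :: blocksFrom a b m (c + 1), ?_, ?_, ?_⟩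
  · have h1 := ab_blocksFrom_suffix (a := a) (b := b) (m := m - 1) (by omega) (c + 1)
    have h2 := blocksFrom_add_suffix a b 1 (m - 2) (c + 2)
    rw [Nat.sub_add_cancel (by omega : 1 ≤ m)] at h1
    rw [show 1 + (m - 2) = m - 1 by omega, show m - 2 + (c + 2) = x by omega] at h2
    exact h1.trans h2
  · simp [blocksFrom]
  · exact hF.trans (by simp [blocksFrom])

def abTailFactors (a b : ℕ) : ℕ → ℕ → List (List ℕ)
  | _, 0 => [[a, b], [0]]
  | m, c + 1 => (a :: b :: List.replicate m a) :: abTailFactors a b (m + 1) c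

theorem length_abTailFactors (a b m c : ℕ) : (abTailFactors a b m c).length = c + 2 := by
  induction c generalizing m with
  | zero => rfl
  | succ c ih => simp [abTailFactors, ih]

theorem isLZ77From_abTailFactors (ha : a ≠ 0) (hab : a ≠ b) {x : ℕ} (c : ℕ) {m : ℕ}
    (hm : 2 ≤ m) (hx : m + c = x) :
    IsLZ77From (blocksFrom a b 1 x) (abTailFactors a b m c)
      (a :: b :: blocksFrom a b (m + 1) c) := by
  induction c generalizing m with
  | zero =>
    refine IsLZ77From.cons (R := [0]) ?_ (IsLZ77From.cons (isGreedyFactor_singleton_self 0) rfl)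
    exact isGreedyFactor_of_append_singleton (by simp) (List.prefix_refl _)
      (Or.inr (hasEarlierSource_of_prefix_ab_replicate hm hx (by simp)))
      (not_hasEarlierSource_ab_zero ha hab)
  | succ c ih =>
    have hsplit : a :: b :: blocksFrom a b (m + 1) (c + 1) =
        (a :: b :: List.replicate m a) ++ a :: b :: blocksFrom a b (m + 2) c := by
      simp [blocksFrom, List.replicate_succ']
    rw [hsplit]
    refine IsLZ77From.cons ?_ (ih (m := m + 1) (by omega) (by omega))
    refine isGreedyFactor_of_append_singleton (c := a) (by simp) (by simp)
      (Or.inr ?_) ?_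
    · exact hsplit ▸ hasEarlierSource_of_prefix_ab_replicate hm hx (List.prefix_refl _)
    · rw [← hsplit]
      simpa [List.replicate_succ'] using
        not_hasEarlierSource_ab_replicate (n := m + 1) (c := c + 1) hab (by omega)

theorem isLZ77From_blocksFrom_one (ha : a ≠ 0) (hab : a ≠ b) {x : ℕ} (hx : 2 ≤ x) :
    IsLZ77From (blocksFrom a b 1 x) ([a] :: [b] :: [a] :: abTailFactors a b 2 (x - 2))
      (blocksFrom a b 1 x) := by
  obtain ⟨c, rfl⟩ := Nat.exists_eq_add_of_le' hx
  set T := blocksFrom a b 1 (c + 2)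
  set U := a :: b :: blocksFrom a b 3 c
  have hT : T = a :: b :: a :: U := by simp [T, U, blocksFrom]
  have hno (k : ℕ) (hk : k ≤ 3) (F : List ℕ) (hF : ∀ j < k, ¬ F <+: (a :: b :: a :: U).drop j) :
      ¬ HasEarlierSource T ((a :: b :: a :: U).drop k) F := by
    rw [hT, hasEarlierSource_drop_iff (by simp; omega)]
    exact fun ⟨j, hj, hp⟩ => hF j hj hp
  suffices IsLZ77From T ([a] :: [b] :: [a] :: abTailFactors a b 2 c) ([a] ++ ([b] ++ ([a] ++ U)))
    by simpa [hT] using this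
  refine .cons ?_ (.cons ?_ (.cons ?_ (isLZ77From_abTailFactors ha hab c le_rfl (by omega))))
  · exact isGreedyFactor_of_append_singleton (c := b) (by simp) (by simp) (Or.inl rfl)
      (hno 0 (by norm_num) _ (by simp))
  · refine isGreedyFactor_of_append_singleton (c := a) (by simp) (by simp) (Or.inl rfl)
      (hno 1 (by norm_num) _ ?_)
    simp [hab]
  · refine isGreedyFactor_of_append_singleton (c := a) (by simp) (by simp [U]) (Or.inl rfl)
      (hno 2 (by norm_num) _ ?_)
    intro j hj
    interval_cases j <;> simp [hab]

end Tx

end LZ77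

/-- For distinct characters `a < b` of `Σ` and `x ≥ 2`, the LZ77
factorization of `T_x = a b a² b ⋯ aˣ b #` has exactly `x + 3` factors. -/
theorem lz_of_Tx (a b x : ℕ) (ha : 1 ≤ a) (hab : a < b) (hx : 2 ≤ x)
    (fs : List (List ℕ)) (hfs : IsLZ77 (Tx a b x) fs) :
    fs.length = x + 3 := by
  rw [LZ77.Tx_eq_blocksFrom] at hfs
  have hunique := (LZ77.isLZ77From_of_isLZ77 hfs).unique
    (LZ77.isLZ77From_blocksFrom_one (by omega) hab.ne hx)
  rw [hunique]
  simp [LZ77.length_abTailFactors]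
  omega
end
end

section
/- Let T = T_1 T_2 ⋯ T_z be the LZ77 factorization of T and let i < z. If the factor T_i admits an earlier occurrence starting at a position j with 1 ≤ j ≤ |T_1⋯T_{i−1}| (i.e., a source lying within T), then T_i is a right-maximal substring of T. -/
/-! Basic definitions: strings are lists of naturals; the separator `#` is `0`;
the alphabet is `Σ = [1..σ]`. Occurrences are taken in the circular version of `T`. -/

noncomputable section
open Classical

/-! Let `F` be the factor starting at `k` and `c` the character following it (`F` is not the
last factor). `F` does not contain `#`, so its source at `j < k` cannot reach the end of `T`
and is also followed by a character `d`. If `c = d`, then `Fc` would have the source `j`,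
contradicting greediness; hence `c ≠ d` are two right extensions of `F`. -/

section Sentinel

variable {α : Type*} {S F : List α} {a : α} {k : ℕ}

theorem not_mem_of_prefix_drop_append_singleton (ha : a ∉ S)
    (hF : F <+: (S ++ [a]).drop k) (hlt : F.length < ((S ++ [a]).drop k).length) : a ∉ F := by
  have hle : k + F.length ≤ S.length := by
    simp only [List.length_drop, List.length_append, List.length_singleton] at hlt
    omega
  rw [List.prefix_iff_eq_take.mp hF, List.take_drop, List.take_append_of_le_length hle]
  exact fun h => ha (List.mem_of_mem_take (List.mem_of_mem_drop h))

theorem mem_drop_append_singleton (hk : k < (S ++ [a]).length) : a ∈ (S ++ [a]).drop k := by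
  simp only [List.length_append, List.length_singleton] at hk
  simp [List.drop_append_of_le_length (by omega : k ≤ S.length)]

end Sentinel

theorem Wellformed.exists_eq_append_zero {σ : ℕ} {T : List ℕ} (hT : Wellformed σ T) :
    ∃ S, T = S ++ [0] ∧ 0 ∉ S := by
  obtain ⟨S, rfl, hS⟩ := hT
  exact ⟨S, rfl, fun h => absurd (hS 0 h).1 (by norm_num)⟩

theorem circOccAt_of_prefix_drop {T W : List ℕ} {p : ℕ} (h : W <+: T.drop p) :
    CircOccAt T W p := by
  intro j hj
  have hjT : j < (T.drop p).length := hj.trans_le h.length_le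
  rw [List.length_drop] at hjT
  rw [Nat.mod_eq_of_lt (by omega), List.getD_eq_getElem _ _ hj,
    List.getD_eq_getElem _ _ (by omega), h.getElem hj, List.getElem_drop]

theorem mem_sigmaR_of_prefix_drop {T W : List ℕ} {b p : ℕ} (h : W ++ [b] <+: T.drop p) :
    b ∈ SigmaR T W := by
  have hp : p < T.length := by
    have := h.length_le
    simp only [List.length_append, List.length_singleton, List.length_drop] at this
    omega
  refine Finset.mem_filter.mpr ⟨?_, p, Finset.mem_filter.mpr
    ⟨Finset.mem_range.mpr hp, circOccAt_of_prefix_drop h⟩⟩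
  exact List.mem_toFinset.mpr (List.mem_of_mem_drop (h.subset (by simp)))

namespace IsLZ77

variable {T : List ℕ} {fs : List (List ℕ)} {i : ℕ}

theorem drop_length_flatten_take (hfs : IsLZ77 T fs) (hi : i < fs.length) :
    T.drop (fs.take i).flatten.length = fs[i] ++ (fs.drop (i + 1)).flatten := by
  have hsplit : T = (fs.take i).flatten ++ (fs.drop i).flatten := by
    rw [← List.flatten_append, List.take_append_drop, hfs.1]
  rw [hsplit, List.drop_left, List.drop_eq_getElem_cons hi, List.flatten_cons]

theorem length_getElem_lt_length_drop (hfs : IsLZ77 T fs) (h : i + 1 < fs.length) :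
    fs[i].length < (T.drop (fs.take i).flatten.length).length := by
  have hnext : fs[i + 1] ≠ [] := hfs.2.1 _ (List.getElem_mem h)
  rw [hfs.drop_length_flatten_take (by omega), List.drop_eq_getElem_cons h, List.flatten_cons, List.length_append,
    List.length_append]
  have := List.length_pos_iff.mpr hnext
  omega

theorem append_singleton_not_prefix_drop (hfs : IsLZ77 T fs) (hi : i < fs.length) {b j : ℕ}
    (hb : fs[i] ++ [b] <+: T.drop (fs.take i).flatten.length)
    (hj : j < (fs.take i).flatten.length) : ¬ fs[i] ++ [b] <+: T.drop j :=
  fun hsrc => (hfs.2.2 i hi).2 _ hb (by simp) (Or.inr ⟨j, hj, hsrc⟩)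

end IsLZ77

/-- Let `T = T₁T₂⋯T_z` be the LZ77 factorization of `T`, and let
`i < z`.  If the factor `Tᵢ` admits an earlier occurrence starting at a position
inside `T` (a source lying within `T`), then `Tᵢ` is a right-maximal substring of `T`.
(Factors are 0-indexed here, so `i + 1 < z` expresses that `Tᵢ` is not the last
factor.) -/
theorem lz_factor_right_maximal (σ : ℕ) (T : List ℕ) (hT : Wellformed σ T)
    (fs : List (List ℕ)) (hfs : IsLZ77 T fs) (i : ℕ) (h : i + 1 < fs.length)
    (hsrc : ∃ j, j < ((fs.take i).flatten).length ∧
      fs.get ⟨i, Nat.lt_of_succ_lt h⟩ <+: T.drop j) :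
    RightMaximal T (fs.get ⟨i, Nat.lt_of_succ_lt h⟩) := by
  simp only [List.get_eq_getElem] at hsrc ⊢
  obtain ⟨j, hjk, hjF⟩ := hsrc
  set k := (fs.take i).flatten.length
  have hkF : fs[i] <+: T.drop k := ⟨_, (hfs.drop_length_flatten_take _).symm⟩
  have hlt := hfs.length_getElem_lt_length_drop h
  obtain ⟨c, hc⟩ : ∃ c, fs[i] ++ [c] <+: T.drop k := ⟨_, List.concat_get_prefix hkF hlt⟩
  obtain ⟨d, hd⟩ : ∃ d, fs[i] ++ [d] <+: T.drop j := by
    have hj : j < T.length := by rw [List.length_drop] at hlt; omega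
    obtain ⟨S, rfl, hS⟩ := hT.exists_eq_append_zero
    have hjlt : fs[i].length < ((S ++ [0]).drop j).length := by
      by_contra! hle
      exact not_mem_of_prefix_drop_append_singleton hS hkF hlt
        ((hjF.eq_of_length_le hle) ▸ mem_drop_append_singleton hj)
    exact ⟨_, List.concat_get_prefix hjF hjlt⟩
  have hcd : c ≠ d := by
    rintro rfl
    exact hfs.append_singleton_not_prefix_drop _ hc hjk hd
  exact Finset.one_lt_card.mpr
    ⟨c, mem_sigmaR_of_prefix_drop hc, d, mem_sigmaR_of_prefix_drop hd, hcd⟩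
end
end

section
/- Let V ∈ M_T ∪ {ε} and let b ∈ [0..σ] be a character with |P_T(Vb)| > 1. Then the shortest right-maximal extension Y of Vb exists, P_T(Vb) = P_T(Y), and Y is a maximal repeat of T if and only if Vb is left-maximal in T. (This gives the bijection between the suffix-tree edges of T leaving maximal-repeat nodes and the Weiner links of the suffix tree of the reverse of T departing from maximal-repeat nodes: such an edge leads to a maximal-repeat node exactly when the corresponding Weiner link is explicit.) -/
/-! Basic definitions: strings are lists of naturals; the separator `#` is `0`;
the alphabet is `Σ = [1..σ]`. Occurrences are taken in the circular version of `T`. -/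

noncomputable section
open Classical

/-!
Since `#` occurs only once, distinct positions of `T` start distinct rotations, so some two
occurrences of `X` read different circular substrings of a common length; let `L` be the least
such length. All occurrences of `X` agree on their first `L - 1` characters, which form a string
`Y` with `X <+: Y` and `𝒫_T(Y) = 𝒫_T(X)`. Two occurrences continue `Y` by different characters,
so `Y` is right-maximal, while a right-maximal `Z` extending `X` exhibits two occurrences of `X`
that differ within `|Z| + 1` characters, so `|Z| ≥ L - 1`. As `X` and `Y` occur at the same
positions, they have the same left extensions.
-/

variable {σ : ℕ} {T W X Y Z : List ℕ} {i j p q ℓ : ℕ}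

def circSub (T : List ℕ) (i ℓ : ℕ) : List ℕ :=
  (List.range ℓ).map fun j => T.getD ((i + j) % T.length) 0

@[simp]
lemma length_circSub : (circSub T i ℓ).length = ℓ := by
  simp [circSub]

lemma getD_circSub (hj : j < ℓ) :
    (circSub T i ℓ).getD j 0 = T.getD ((i + j) % T.length) 0 := by
  simp [circSub, hj]

lemma circOccAt_iff_eq_circSub : CircOccAt T W i ↔ W = circSub T i W.length := by
  simp only [CircOccAt, List.ext_getElem_iff, length_circSub, true_and]
  refine forall_congr' fun j => ⟨fun h hj _ => ?_, fun h hj => ?_⟩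
  · simpa [circSub, List.getElem?_eq_getElem hj] using h hj
  · simpa [circSub, List.getElem?_eq_getElem hj] using h hj hj

lemma take_circSub (h : ℓ ≤ j) : (circSub T i j).take ℓ = circSub T i ℓ := by
  simp [circSub, ← List.map_take, List.take_range, Nat.min_eq_left h]

lemma circSub_prefix_circSub (h : ℓ ≤ j) : circSub T i ℓ <+: circSub T i j := by
  rw [← take_circSub h]
  exact List.take_prefix _ _

lemma circSub_succ :
    circSub T i (ℓ + 1) = circSub T i ℓ ++ [T.getD ((i + ℓ) % T.length) 0] := by
  simp [circSub, List.range_succ]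

lemma mem_pset_iff : p ∈ Pset T W ↔ p < T.length ∧ CircOccAt T W p := by
  simp [Pset]

lemma CircOccAt.of_prefix (hWZ : W <+: Z) (hZ : CircOccAt T Z p) : CircOccAt T W p := by
  obtain ⟨U, rfl⟩ := hWZ
  intro j hj
  simpa [List.getElem?_append_left hj] using hZ j (by simp; omega)

lemma pset_subset_pset_of_prefix (hWZ : W <+: Z) : Pset T Z ⊆ Pset T W := fun _ hp =>
  mem_pset_iff.2 ⟨(mem_pset_iff.1 hp).1, (mem_pset_iff.1 hp).2.of_prefix hWZ⟩

lemma eq_circSub_of_mem_pset (hp : p ∈ Pset T W) : W = circSub T p W.length :=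
  circOccAt_iff_eq_circSub.1 (mem_pset_iff.1 hp).2

lemma CircOccAt.tail {a : ℕ} (h : CircOccAt T (a :: W) p) :
    CircOccAt T W ((p + 1) % T.length) := by
  intro j hj
  rw [Nat.mod_add_mod, add_right_comm, add_assoc]
  simpa using h (j + 1) (by simp; omega)

lemma CircOccAt.cons {a : ℕ} (ha : T.getD (p % T.length) 0 = a)
    (h : CircOccAt T W ((p + 1) % T.length)) : CircOccAt T (a :: W) p := by
  rintro (_ | j) hj
  · simpa using ha.symm
  · rw [List.getD_cons_succ, h j (by simpa using hj), Nat.mod_add_mod, add_right_comm, add_assoc]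

lemma getD_mod_mem (hT : 0 < T.length) (m : ℕ) : T.getD (m % T.length) 0 ∈ T := by
  rw [List.getD_eq_getElem _ _ (Nat.mod_lt _ hT)]
  exact List.getElem_mem _

lemma RightMaximal.pset_nonempty (hZ : RightMaximal T Z) : (Pset T Z).Nonempty := by
  obtain ⟨c, hc⟩ := Finset.card_pos.1 (zero_lt_one.trans hZ)
  obtain ⟨p, hp⟩ := (Finset.mem_filter.1 hc).2
  exact ⟨p, pset_subset_pset_of_prefix (List.prefix_append Z [c]) hp⟩

namespace Wellformed

lemma length_pos (hT : Wellformed σ T) : 0 < T.length := by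
  obtain ⟨S, rfl, -⟩ := hT
  simp

lemma getD_eq_zero_iff (hT : Wellformed σ T) (hk : j < T.length) :
    T.getD j 0 = 0 ↔ j = T.length - 1 := by
  obtain ⟨S, rfl, hS⟩ := hT
  rw [List.getD_eq_getElem _ _ hk]
  simp only [List.length_append, List.length_singleton] at hk ⊢
  rcases Nat.lt_or_ge j S.length with hj | hj
  · rw [List.getElem_append_left hj]
    have := hS _ (List.getElem_mem hj)
    omega
  · rw [List.getElem_append_right hj]
    simp; omega

/-- The rotation at `j` differs from the one at `i` where the latter reads the unique `#`. -/
lemma circSub_length_injective (hT : Wellformed σ T) (hi : i < T.length) (hj : j < T.length)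
    (h : circSub T i T.length = circSub T j T.length) : i = j := by
  set n := T.length
  have hk : n - 1 - i < n := by omega
  have hsep : T.getD ((j + (n - 1 - i)) % n) 0 = 0 := by
    have := congrArg (fun W : List ℕ => W.getD (n - 1 - i) 0) h
    simp only [getD_circSub hk] at this
    rw [← this, show i + (n - 1 - i) = n - 1 by omega, Nat.mod_eq_of_lt (by omega)]
    exact (hT.getD_eq_zero_iff (by omega)).2 rfl
  have := (hT.getD_eq_zero_iff (Nat.mod_lt _ hT.length_pos)).1 hsep
  rcases Nat.lt_or_ge (j + (n - 1 - i)) n with hlt | hge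
  · rw [Nat.mod_eq_of_lt hlt] at this; omega
  · rw [Nat.mod_eq_sub_mod hge, Nat.mod_eq_of_lt (by omega)] at this; omega

end Wellformed

lemma circSub_eq_take_rot (hi : i < T.length) (hℓ : ℓ ≤ T.length) :
    circSub T i ℓ = (rot T i).take ℓ := by
  apply List.ext_getElem (by simp [rot]; omega)
  intro j hj _
  simp only [length_circSub] at hj
  simp only [List.getElem_take, circSub, List.getElem_map, List.getElem_range, rot]
  rcases Nat.lt_or_ge j (T.length - i) with hji | hji
  · rw [List.getElem_append_left (by simpa using hji)]
    have hij : i + j < T.length := by omega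
    simp [Nat.mod_eq_of_lt hij, List.getElem?_eq_getElem hij]
  · rw [List.getElem_append_right (by simpa using hji)]
    have : (i + j) % T.length = j - (T.length - i) := by
      rw [Nat.mod_eq_sub_mod (by omega), Nat.mod_eq_of_lt (by omega)]
      omega
    have hj' : j - (T.length - i) < T.length := by omega
    simp [this, List.getElem?_eq_getElem hj']

lemma circSub_mem_circSubstrings (hi : i < T.length) (hℓ : ℓ ≤ T.length) :
    circSub T i ℓ ∈ circSubstrings T :=
  Finset.mem_image.2 ⟨(i, ℓ), by simp [hi]; omega, (circSub_eq_take_rot hi hℓ).symm⟩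

lemma sigmaL_eq_of_prefix_of_pset_eq (hXY : X <+: Y) (h : Pset T Y = Pset T X) :
    SigmaL T Y = SigmaL T X := by
  refine Finset.filter_congr fun a _ =>
    ⟨fun ⟨p, hp⟩ => ⟨p, pset_subset_pset_of_prefix ((List.prefix_cons_inj a).2 hXY) hp⟩, ?_⟩
  rintro ⟨p, hp⟩
  obtain ⟨hpT, hocc⟩ := mem_pset_iff.1 hp
  have hnext : (p + 1) % T.length ∈ Pset T Y :=
    h ▸ mem_pset_iff.2 ⟨Nat.mod_lt _ (by omega), hocc.tail⟩
  refine ⟨p, mem_pset_iff.2 ⟨hpT, (mem_pset_iff.1 hnext).2.cons ?_⟩⟩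
  simpa using (hocc 0 (by simp)).symm

lemma mem_maxRepeats_iff_leftMaximal (hY : Y ∈ circSubstrings T) (hne : Y ≠ [])
    (hP : 1 < (Pset T Y).card) (hR : RightMaximal T Y) :
    Y ∈ MaxRepeats T ↔ LeftMaximal T Y := by
  simp [MaxRepeats, hY, hne, hP, hR]

def divergenceLengths (T X : List ℕ) : Set ℕ :=
  {ℓ | ∃ p ∈ Pset T X, ∃ q ∈ Pset T X, circSub T p ℓ ≠ circSub T q ℓ}

def divergenceLength (T X : List ℕ) : ℕ := sInf (divergenceLengths T X)

lemma length_mem_divergenceLengths (hT : Wellformed σ T) (hP : 1 < (Pset T X).card) :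
    T.length ∈ divergenceLengths T X := by
  obtain ⟨p, hp, q, hq, hpq⟩ := Finset.one_lt_card.1 hP
  exact ⟨p, hp, q, hq, fun h =>
    hpq (hT.circSub_length_injective (mem_pset_iff.1 hp).1 (mem_pset_iff.1 hq).1 h)⟩

lemma divergenceLength_mem (hT : Wellformed σ T) (hP : 1 < (Pset T X).card) :
    divergenceLength T X ∈ divergenceLengths T X :=
  Nat.sInf_mem ⟨_, length_mem_divergenceLengths hT hP⟩

lemma divergenceLength_le_length (hT : Wellformed σ T) (hP : 1 < (Pset T X).card) :
    divergenceLength T X ≤ T.length :=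
  Nat.sInf_le (length_mem_divergenceLengths hT hP)

lemma circSub_eq_of_lt_divergenceLength (hℓ : ℓ < divergenceLength T X)
    (hp : p ∈ Pset T X) (hq : q ∈ Pset T X) : circSub T p ℓ = circSub T q ℓ := by
  by_contra h
  exact Nat.notMem_of_lt_sInf hℓ ⟨p, hp, q, hq, h⟩

lemma length_lt_divergenceLength (hT : Wellformed σ T) (hP : 1 < (Pset T X).card) :
    X.length < divergenceLength T X := by
  obtain ⟨p, hp, q, hq, hpq⟩ := divergenceLength_mem hT hP
  by_contra! hle
  rw [← take_circSub hle, ← take_circSub hle, ← eq_circSub_of_mem_pset hp,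
    ← eq_circSub_of_mem_pset hq] at hpq
  exact hpq rfl

lemma divergenceLength_le_of_rightMaximal (hXZ : X <+: Z) (hZ : RightMaximal T Z) :
    divergenceLength T X ≤ Z.length + 1 := by
  obtain ⟨c, hc, d, hd, hcd⟩ := Finset.one_lt_card.1 hZ
  obtain ⟨p, hp⟩ := (Finset.mem_filter.1 hc).2
  obtain ⟨q, hq⟩ := (Finset.mem_filter.1 hd).2
  refine Nat.sInf_le ⟨p, pset_subset_pset_of_prefix (hXZ.trans (Z.prefix_append _)) hp,
    q, pset_subset_pset_of_prefix (hXZ.trans (Z.prefix_append _)) hq, fun h => hcd ?_⟩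
  have hZc := eq_circSub_of_mem_pset hp
  have hZd := eq_circSub_of_mem_pset hq
  simp only [List.length_append, List.length_singleton] at hZc hZd
  simpa [← hZc, ← hZd] using h

lemma circOccAt_circSub_pred_divergenceLength (hT : Wellformed σ T) (hP : 1 < (Pset T X).card)
    (hi : i ∈ Pset T X) (hp : p ∈ Pset T X) :
    CircOccAt T (circSub T i (divergenceLength T X - 1)) p := by
  have := length_lt_divergenceLength hT hP
  rw [circOccAt_iff_eq_circSub, length_circSub]
  exact circSub_eq_of_lt_divergenceLength (by omega) hi hp

lemma prefix_circSub_pred_divergenceLength (hT : Wellformed σ T) (hP : 1 < (Pset T X).card)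
    (hi : i ∈ Pset T X) : X <+: circSub T i (divergenceLength T X - 1) := by
  have := length_lt_divergenceLength hT hP
  nth_rw 1 [eq_circSub_of_mem_pset hi]
  exact circSub_prefix_circSub (by omega)

lemma pset_circSub_pred_divergenceLength (hT : Wellformed σ T) (hP : 1 < (Pset T X).card)
    (hi : i ∈ Pset T X) : Pset T (circSub T i (divergenceLength T X - 1)) = Pset T X := by
  refine (pset_subset_pset_of_prefix (prefix_circSub_pred_divergenceLength hT hP hi)).antisymm
    fun p hp => ?_
  exact mem_pset_iff.2
    ⟨(mem_pset_iff.1 hp).1, circOccAt_circSub_pred_divergenceLength hT hP hi hp⟩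

lemma rightMaximal_circSub_pred_divergenceLength (hT : Wellformed σ T)
    (hP : 1 < (Pset T X).card) (hi : i ∈ Pset T X) :
    RightMaximal T (circSub T i (divergenceLength T X - 1)) := by
  set L := divergenceLength T X
  have hL : L - 1 + 1 = L := by have := length_lt_divergenceLength hT hP; omega
  have hext : ∀ p ∈ Pset T X,
      circSub T i (L - 1) ++ [T.getD ((p + (L - 1)) % T.length) 0] = circSub T p L := by
    intro p hp
    have hsucc : circSub T p L = _ := hL ▸ circSub_succ (T := T) (i := p) (ℓ := L - 1)
    rw [hsucc, circSub_eq_of_lt_divergenceLength (by omega) hi hp]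
  have hmem : ∀ p ∈ Pset T X,
      T.getD ((p + (L - 1)) % T.length) 0 ∈ SigmaR T (circSub T i (L - 1)) := by
    intro p hp
    refine Finset.mem_filter.2 ⟨List.mem_toFinset.2 (getD_mod_mem hT.length_pos _), p, ?_⟩
    refine mem_pset_iff.2 ⟨(mem_pset_iff.1 hp).1, circOccAt_iff_eq_circSub.2 ?_⟩
    rw [hext p hp, length_circSub]
  obtain ⟨p, hp, q, hq, hpq⟩ := divergenceLength_mem hT hP
  refine Finset.one_lt_card.2 ⟨_, hmem p hp, _, hmem q hq, fun h => hpq ?_⟩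
  rw [← hext p hp, ← hext q hq, h]

lemma shortestRightMaxExt_circSub_pred_divergenceLength (hT : Wellformed σ T)
    (hP : 1 < (Pset T X).card) (hi : i ∈ Pset T X) :
    ShortestRightMaxExt T X (circSub T i (divergenceLength T X - 1)) :=
  ⟨prefix_circSub_pred_divergenceLength hT hP hi,
    rightMaximal_circSub_pred_divergenceLength hT hP hi, fun Z hXZ hZ => by
      have := divergenceLength_le_of_rightMaximal hXZ hZ
      simp only [length_circSub]; omega⟩

lemma ShortestRightMaxExt.eq_circSub_pred_divergenceLength (hY : ShortestRightMaxExt T X Y)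
    (hT : Wellformed σ T) (hP : 1 < (Pset T X).card) (hi : i ∈ Pset T X) :
    Y = circSub T i (divergenceLength T X - 1) := by
  obtain ⟨hXY, hR, hmin⟩ := hY
  obtain ⟨p, hp⟩ := hR.pset_nonempty
  have hle := hmin _ (prefix_circSub_pred_divergenceLength hT hP hi)
    (rightMaximal_circSub_pred_divergenceLength hT hP hi)
  have hge := divergenceLength_le_of_rightMaximal hXY hR
  have hpos := length_lt_divergenceLength hT hP
  rw [length_circSub] at hle
  rw [eq_circSub_of_mem_pset hp, show Y.length = divergenceLength T X - 1 by omega]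
  exact circSub_eq_of_lt_divergenceLength (by omega) (pset_subset_pset_of_prefix hXY hp) hi

theorem shortest_right_maximal_extension_general (σ : ℕ) (T : List ℕ) (hT : Wellformed σ T)
    (V : List ℕ) (b : ℕ)
    (hP : 1 < (Pset T (V ++ [b])).card) :
    ∃ Y : List ℕ, ShortestRightMaxExt T (V ++ [b]) Y ∧
      (∀ Y' : List ℕ, ShortestRightMaxExt T (V ++ [b]) Y' → Y' = Y) ∧
      Pset T (V ++ [b]) = Pset T Y ∧
      (Y ∈ MaxRepeats T ↔ LeftMaximal T (V ++ [b])) := by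
  obtain ⟨i, hi⟩ := Finset.card_pos.1 (zero_lt_one.trans hP)
  set Y := circSub T i (divergenceLength T (V ++ [b]) - 1)
  have hY : ShortestRightMaxExt T (V ++ [b]) Y :=
    shortestRightMaxExt_circSub_pred_divergenceLength hT hP hi
  have hPY : Pset T Y = Pset T (V ++ [b]) := pset_circSub_pred_divergenceLength hT hP hi
  refine ⟨Y, hY, fun Y' hY' => hY'.eq_circSub_pred_divergenceLength hT hP hi, hPY.symm, ?_⟩
  have hmem : Y ∈ circSubstrings T := circSub_mem_circSubstrings (mem_pset_iff.1 hi).1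
    ((Nat.sub_le _ 1).trans (divergenceLength_le_length hT hP))
  have hne : Y ≠ [] := fun h => by simpa [h] using hY.1
  rw [mem_maxRepeats_iff_leftMaximal hmem hne (hPY ▸ hP) hY.2.1, LeftMaximal, LeftMaximal,
    sigmaL_eq_of_prefix_of_pset_eq hY.1 hPY]

/-- Let `V ∈ ℳ_T ∪ {ε}` and let `b ∈ [0..σ]` with `|𝒫_T(Vb)| > 1`.
Then the shortest right-maximal extension `Y` of `Vb` exists (and is unique),
`𝒫_T(Vb) = 𝒫_T(Y)`, and `Y` is a maximal repeat of `T` iff `Vb` is left-maximal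
in `T`. -/
theorem shortest_right_maximal_extension (σ : ℕ) (T : List ℕ) (hT : Wellformed σ T)
    (V : List ℕ) (hV : V = [] ∨ V ∈ MaxRepeats T) (b : ℕ) (hb : b ≤ σ)
    (hP : 1 < (Pset T (V ++ [b])).card) :
    ∃ Y : List ℕ, ShortestRightMaxExt T (V ++ [b]) Y ∧
      (∀ Y' : List ℕ, ShortestRightMaxExt T (V ++ [b]) Y' → Y' = Y) ∧
      Pset T (V ++ [b]) = Pset T Y ∧
      (Y ∈ MaxRepeats T ↔ LeftMaximal T (V ++ [b])) :=
  shortest_right_maximal_extension_general σ T hT V b hP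
end
end
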